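/- arXiv:1011.1065 — 15 statements merged into one kernel-verified Lean document; each statement's English description precedes it below -/
import Mathlib

section
/- Let θ_1 > θ_2 > … > θ_I > 0, N_1, …, N_I > 0, and S > 0. Then there exists a unique λ > 0 such that ∑_{i=1}^I N_i·(√(θ_i/λ) − 1)^+ = S; moreover this λ satisfies λ < θ_1. -/
/-!
The total demand `λ ↦ ∑ Nᵢ (√(θᵢ/λ) - 1)⁺` is continuous on `(0, ∞)`, strictly decreasing on
`(0, θ₁]` (because the top group's term is) and zero from `θ₁` on. At `λ = θ₁ / (1 + S/N₁)²`
the top group alone already demands `S`, so the intermediate value theorem yields the level,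
and strict monotonicity makes it unique.
-/

open Set Finset

theorem exists_unique_eq_of_strictAntiOn_of_nonpos {f : ℝ → ℝ} {a b c S : ℝ}
    (hca : c < a) (hab : a ≤ b) (hcont : ContinuousOn f (Icc a b))
    (hanti : StrictAntiOn f (Ioc c b)) (hnonpos : ∀ x, b ≤ x → f x ≤ 0)
    (hS : 0 < S) (hfa : S ≤ f a) :
    ∃ lam : ℝ, c < lam ∧ f lam = S ∧ lam < b ∧
      ∀ lam' : ℝ, c < lam' → f lam' = S → lam' = lam := by
  have hlt_of_eq : ∀ x, f x = S → x < b := fun x hx =>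
    not_le.mp fun hbx => (hnonpos x hbx).not_gt (hx ▸ hS)
  obtain ⟨lam, hmem, hval⟩ :=
    intermediate_value_Icc' hab hcont ⟨(hnonpos b le_rfl).trans hS.le, hfa⟩
  have hlam : c < lam := hca.trans_le hmem.1
  refine ⟨lam, hlam, hval, hlt_of_eq lam hval, fun lam' hlam' hval' => ?_⟩
  exact hanti.injOn ⟨hlam', (hlt_of_eq lam' hval').le⟩ ⟨hlam, (hlt_of_eq lam hval).le⟩
    (hval'.trans hval.symm)

/-- A user's resource demand under complete price differentiation at water level `lam`. -/
noncomputable def cpAllocation (θ lam : ℝ) : ℝ := max (√(θ / lam) - 1) 0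

theorem cpAllocation_nonneg (θ lam : ℝ) : 0 ≤ cpAllocation θ lam := le_max_right _ _

theorem cpAllocation_eq_zero {θ lam : ℝ} (hlam : 0 < lam) (hθ : θ ≤ lam) :
    cpAllocation θ lam = 0 := by
  have : √(θ / lam) ≤ 1 := Real.sqrt_le_one.mpr ((div_le_one hlam).mpr hθ)
  exact max_eq_right (by linarith)

theorem cpAllocation_antitoneOn {θ : ℝ} (hθ : 0 ≤ θ) : AntitoneOn (cpAllocation θ) (Ioi 0) :=
  fun x hx _ _ hxy => max_le_max (by gcongr) le_rfl

theorem cpAllocation_strictAntiOn (θ : ℝ) : StrictAntiOn (cpAllocation θ) (Ioc 0 θ) := by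
  intro x hx y hy hxy
  have hy1 : 1 ≤ √(θ / y) := Real.one_le_sqrt.mpr ((one_le_div (hx.1.trans hxy)).mpr hy.2)
  have hθ : 0 < θ := hx.1.trans_le hx.2
  have hyx : √(θ / y) < √(θ / x) :=
    Real.sqrt_lt_sqrt (div_pos hθ (hx.1.trans hxy)).le (div_lt_div_of_pos_left hθ hx.1 hxy)
  rw [cpAllocation, cpAllocation, max_eq_left (by linarith), max_eq_left (by linarith)]
  linarith

theorem cpAllocation_continuousOn (θ : ℝ) : ContinuousOn (cpAllocation θ) (Ioi 0) :=
  ((continuousOn_const.div continuousOn_id fun _ hx => ne_of_gt hx).sqrt.sub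
    continuousOn_const).sup continuousOn_const

theorem cpAllocation_div_one_add_sq {θ s : ℝ} (hθ : 0 < θ) (hs : 0 ≤ s) :
    cpAllocation θ (θ / (1 + s) ^ 2) = s := by
  have : θ / (θ / (1 + s) ^ 2) = (1 + s) ^ 2 := by field_simp
  rw [cpAllocation, this, Real.sqrt_sq (by linarith), add_sub_cancel_left, max_eq_left hs]

section TotalAllocation

variable {ι : Type*} (s : Finset ι) (θ N : ι → ℝ)

noncomputable def cpTotalAllocation (lam : ℝ) : ℝ := ∑ i ∈ s, N i * cpAllocation (θ i) lam

variable {s θ N}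

theorem cpTotalAllocation_eq_zero {lam : ℝ} (hlam : 0 < lam) (hθ : ∀ i ∈ s, θ i ≤ lam) :
    cpTotalAllocation s θ N lam = 0 :=
  Finset.sum_eq_zero fun i hi => by rw [cpAllocation_eq_zero hlam (hθ i hi), mul_zero]

theorem mul_cpAllocation_le_cpTotalAllocation (hN : ∀ i ∈ s, 0 ≤ N i) {j : ι} (hj : j ∈ s)
    (lam : ℝ) : N j * cpAllocation (θ j) lam ≤ cpTotalAllocation s θ N lam :=
  Finset.single_le_sum (f := fun i => N i * cpAllocation (θ i) lam)
    (fun i hi => mul_nonneg (hN i hi) (cpAllocation_nonneg _ _)) hj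

theorem cpTotalAllocation_strictAntiOn (hθ : ∀ i ∈ s, 0 ≤ θ i) (hN : ∀ i ∈ s, 0 ≤ N i)
    {j : ι} (hj : j ∈ s) (hNj : 0 < N j) :
    StrictAntiOn (cpTotalAllocation s θ N) (Ioc 0 (θ j)) := by
  intro x hx y hy hxy
  refine Finset.sum_lt_sum (fun i hi => ?_) ⟨j, hj, ?_⟩
  · exact mul_le_mul_of_nonneg_left
      (cpAllocation_antitoneOn (hθ i hi) hx.1 (hx.1.trans hxy) hxy.le) (hN i hi)
  · exact mul_lt_mul_of_pos_left (cpAllocation_strictAntiOn (θ j) hx hy hxy) hNj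

theorem cpTotalAllocation_continuousOn : ContinuousOn (cpTotalAllocation s θ N) (Ioi 0) :=
  continuousOn_finsetSum s fun i _ => continuousOn_const.mul (cpAllocation_continuousOn (θ i))

end TotalAllocation

/-- Existence and uniqueness of the CP water level λ, which moreover satisfies λ < θ_1.
Groups are indexed 0, …, I−1 (so θ 0 is the highest willingness to pay θ_1). -/
theorem cp_water_level_exists_unique (I : ℕ) (hI : 1 ≤ I) (θ N : ℕ → ℝ)
    (hθpos : ∀ i < I, 0 < θ i)
    (hθanti : ∀ i j, i < j → j < I → θ j < θ i)
    (hN : ∀ i < I, 0 < N i)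
    (S : ℝ) (hS : 0 < S) :
    ∃ lam : ℝ, 0 < lam ∧
      (∑ i ∈ Finset.range I, N i * max (Real.sqrt (θ i / lam) - 1) 0 = S) ∧
      lam < θ 0 ∧
      ∀ lam' : ℝ, 0 < lam' →
        (∑ i ∈ Finset.range I, N i * max (Real.sqrt (θ i / lam') - 1) 0 = S) →
        lam' = lam := by
  have h0 : 0 ∈ range I := mem_range.mpr hI
  have hθ0 : 0 < θ 0 := hθpos 0 hI
  have hθle : ∀ i ∈ range I, θ i ≤ θ 0 := fun i hi => by
    rcases Nat.eq_zero_or_pos i with rfl | hi0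
    exacts [le_rfl, (hθanti 0 i hi0 (mem_range.mp hi)).le]
  have hNnonneg : ∀ i ∈ range I, 0 ≤ N i := fun i hi => (hN i (mem_range.mp hi)).le
  set a := θ 0 / (1 + S / N 0) ^ 2
  have hS' : 0 ≤ S / N 0 := (div_pos hS (hN 0 hI)).le
  have ha : 0 < a := by positivity
  have hfa : S ≤ cpTotalAllocation (range I) θ N a := by
    have := mul_cpAllocation_le_cpTotalAllocation (θ := θ) hNnonneg h0 a
    rwa [cpAllocation_div_one_add_sq hθ0 hS', mul_div_cancel₀ _ (hN 0 hI).ne'] at this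
  exact exists_unique_eq_of_strictAntiOn_of_nonpos ha
    (div_le_self hθ0.le (one_le_pow₀ (by linarith)))
    (cpTotalAllocation_continuousOn.mono fun x hx => ha.trans_le hx.1)
    (cpTotalAllocation_strictAntiOn (fun i hi => (hθpos i (mem_range.mp hi)).le) hNnonneg h0
      (hN 0 hI))
    (fun x hx => (cpTotalAllocation_eq_zero (hθ0.trans_le hx)
      fun i hi => (hθle i hi).trans hx).le)
    hS hfa
end

section
/- Let θ_1 > θ_2 > … > θ_I > 0, N_1, …, N_I > 0, and S > 0. Then there exists a unique p > 0 such that ∑_{i=1}^I N_i·(θ_i/p − 1)^+ = S; moreover this p satisfies p < θ_1. -/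
/-!
Write `f(p) = ∑ᵢ Nᵢ (θᵢ/p − 1)⁺`. Each term is antitone in `p > 0`, and a term that is positive
at `q` is strictly larger at every `p < q`; so `f` is strictly decreasing wherever it is positive,
which gives uniqueness. Moreover `f(p) > 0` forces `p < θᵢ ≤ θ₁` for some `i`, so `f(θ₁) = 0 < S`,
while `f(p) → ∞` as `p → 0⁺`; continuity and the intermediate value theorem give existence.
-/

open Filter Topology Set

section WaterFill

variable {ι : Type*} (s : Finset ι) (N θ : ι → ℝ)

noncomputable def waterFill (p : ℝ) : ℝ :=
  ∑ i ∈ s, N i * max (θ i / p - 1) 0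

variable {s N θ}

lemma max_div_sub_one_zero_le_of_le (t : ℝ) {p q : ℝ} (hp : 0 < p) (hpq : p ≤ q) :
    max (t / q - 1) 0 ≤ max (t / p - 1) 0 := by
  rcases le_or_gt 0 t with ht | ht
  · gcongr
  · have : t / q < 0 := div_neg_of_neg_of_pos ht (hp.trans_le hpq)
    exact max_le (by linarith [le_max_right (t / p - 1) 0]) (le_max_right _ _)

lemma exists_lt_of_waterFill_pos {p : ℝ} (hp : 0 < p) (h : 0 < waterFill s N θ p) :
    ∃ i ∈ s, 0 < N i ∧ p < θ i := by
  obtain ⟨i, hi, hterm⟩ := Finset.exists_lt_of_sum_lt (f := fun _ => (0 : ℝ))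
    (by simpa [waterFill] using h)
  have hN : 0 < N i := pos_of_mul_pos_left hterm (le_max_right _ _)
  have hmax : 0 < max (θ i / p - 1) 0 := pos_of_mul_pos_right hterm hN.le
  refine ⟨i, hi, hN, ?_⟩
  rw [← one_lt_div hp]
  linarith [(lt_max_iff.1 hmax).resolve_right (lt_irrefl 0)]

lemma lt_of_waterFill_pos {p b : ℝ} (hθ : ∀ i ∈ s, θ i ≤ b) (hp : 0 < p)
    (h : 0 < waterFill s N θ p) : p < b := by
  obtain ⟨i, hi, -, hpi⟩ := exists_lt_of_waterFill_pos hp h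
  exact hpi.trans_le (hθ i hi)

lemma waterFill_strictAntiOn (hN : ∀ i ∈ s, 0 ≤ N i) :
    StrictAntiOn (waterFill s N θ) {p | 0 < p ∧ 0 < waterFill s N θ p} := by
  rintro p ⟨hp, -⟩ q ⟨hq, hfq⟩ hpq
  obtain ⟨j, hj, hNj, hqj⟩ := exists_lt_of_waterFill_pos hq hfq
  refine Finset.sum_lt_sum (fun i hi => ?_) ⟨j, hj, ?_⟩
  · exact mul_le_mul_of_nonneg_left (max_div_sub_one_zero_le_of_le _ hp hpq.le) (hN i hi)
  · have hθj : 0 < θ j := hq.trans hqj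
    have hone : 1 < θ j / q := (one_lt_div hq).2 hqj
    have hdiv : θ j / q < θ j / p := div_lt_div_of_pos_left hθj hp hpq
    refine mul_lt_mul_of_pos_left ?_ hNj
    rw [max_eq_left (by linarith), max_eq_left (by linarith)]
    linarith

lemma continuousOn_waterFill : ContinuousOn (waterFill s N θ) (Ioi 0) := by
  unfold waterFill
  fun_prop (disch := exact fun _ hx => ne_of_gt hx)

lemma tendsto_waterFill_nhdsGT_zero (hN : ∀ i ∈ s, 0 ≤ N i) {i : ι} (hi : i ∈ s)
    (hNi : 0 < N i) (hθi : 0 < θ i) :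
    Tendsto (waterFill s N θ) (𝓝[>] 0) atTop := by
  have hterm : Tendsto (fun p => N i * (θ i * p⁻¹ - 1)) (𝓝[>] 0) atTop :=
    ((tendsto_inv_nhdsGT_zero.const_mul_atTop hθi).atTop_add
      (tendsto_const_nhds (x := -1))).const_mul_atTop hNi
  refine tendsto_atTop_mono (fun p => ?_) hterm
  calc N i * (θ i * p⁻¹ - 1) ≤ N i * max (θ i / p - 1) 0 :=
        mul_le_mul_of_nonneg_left (le_max_left _ _) hNi.le
    _ ≤ waterFill s N θ p :=
        Finset.single_le_sum (f := fun j => N j * max (θ j / p - 1) 0)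
          (fun j hj => mul_nonneg (hN j hj) (le_max_right _ _)) hi

end WaterFill

/-- Groups are indexed `0, …, I−1`, so `θ 0` is the highest willingness to pay `θ_1`. -/
theorem sp_price_exists_unique (I : ℕ) (hI : 1 ≤ I) (θ N : ℕ → ℝ)
    (hθpos : ∀ i < I, 0 < θ i)
    (hθanti : ∀ i j, i < j → j < I → θ j < θ i)
    (hN : ∀ i < I, 0 < N i)
    (S : ℝ) (hS : 0 < S) :
    ∃ p : ℝ, 0 < p ∧
      (∑ i ∈ Finset.range I, N i * max (θ i / p - 1) 0 = S) ∧
      p < θ 0 ∧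
      ∀ p' : ℝ, 0 < p' →
        (∑ i ∈ Finset.range I, N i * max (θ i / p' - 1) 0 = S) →
        p' = p := by
  set f := waterFill (Finset.range I) N θ
  have h0 : 0 ∈ Finset.range I := Finset.mem_range.2 hI
  have hN' : ∀ i ∈ Finset.range I, 0 ≤ N i := fun i hi => (hN i (Finset.mem_range.1 hi)).le
  have hθle : ∀ i ∈ Finset.range I, θ i ≤ θ 0 := fun i hi => by
    rcases Nat.eq_zero_or_pos i with rfl | hi0
    exacts [le_rfl, (hθanti 0 i hi0 (Finset.mem_range.1 hi)).le]
  have hθ0 := hθpos 0 hI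
  obtain ⟨p₀, hS_le, hp₀, hp₀θ⟩ :=
    (((tendsto_waterFill_nhdsGT_zero hN' h0 (hN 0 hI) hθ0).eventually_ge_atTop S).and
      (Ioo_mem_nhdsGT hθ0)).exists
  have hfθ0 : f (θ 0) ≤ 0 := not_lt.1 fun h => (lt_of_waterFill_pos hθle hθ0 h).false
  obtain ⟨p, ⟨hp₀p, -⟩, hfp⟩ :=
    intermediate_value_Icc' hp₀θ.le (continuousOn_waterFill.mono fun x hx => hp₀.trans_le hx.1)
      ⟨hfθ0.trans hS.le, hS_le⟩
  have hp : 0 < p := hp₀.trans_le hp₀p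
  refine ⟨p, hp, hfp, lt_of_waterFill_pos hθle hp (hfp ▸ hS), fun p' hp' hfp' => ?_⟩
  exact (waterFill_strictAntiOn hN').injOn ⟨hp', hS.trans_eq hfp'.symm⟩ ⟨hp, hS.trans_eq hfp.symm⟩
    (hfp'.trans hfp.symm)
end

section
/- Let θ_1 > θ_2 > … > θ_I > 0, N_1, …, N_I > 0, S > 0, and for k ∈ {1,…,I} define p(k) = ∑_{i=1}^k N_i·θ_i / (S + ∑_{i=1}^k N_i). If k is such that θ_k > p(k) and (k = I or θ_{k+1} ≤ p(k)), then ∑_{i=1}^I N_i·(θ_i/p(k) − 1)^+ = S; consequently p(k) is the unique optimal single price p* and #{i : θ_i > p*} = k. -/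
/-- Correctness of Algorithm 2: if k ∈ {1,…,I} satisfies θ_k > p(k) and
(k = I or θ_{k+1} ≤ p(k)), where p(k) = ∑_{i=1}^k N_i θ_i / (S + ∑_{i=1}^k N_i),
then p(k) satisfies the SP water-filling equation, is the unique optimal single
price, and the effective market {i : θ_i > p(k)} has exactly k groups.
Groups are indexed 0, …, I−1 (so group k of the paper has index k−1). -/
theorem sp_algorithm_correct (I : ℕ) (hI : 1 ≤ I) (θ N : ℕ → ℝ)
    (hθpos : ∀ i < I, 0 < θ i)
    (hθanti : ∀ i j, i < j → j < I → θ j < θ i)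
    (hN : ∀ i < I, 0 < N i)
    (S : ℝ) (hS : 0 < S)
    (k : ℕ) (hk1 : 1 ≤ k) (hkI : k ≤ I)
    (pk : ℝ)
    (hpk : pk = (∑ i ∈ Finset.range k, N i * θ i) /
        (S + ∑ i ∈ Finset.range k, N i))
    (hth : θ (k - 1) > pk)
    (hth' : k = I ∨ θ k ≤ pk) :
    (∑ i ∈ Finset.range I, N i * max (θ i / pk - 1) 0 = S) ∧
    (∀ p' : ℝ, 0 < p' →
      (∑ i ∈ Finset.range I, N i * max (θ i / p' - 1) 0 = S) →
      p' = pk) ∧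
    ((Finset.range I).filter (fun i => pk < θ i)).card = k := by
  have hkI' : k - 1 < I := lt_of_lt_of_le (Nat.sub_lt hk1 one_pos) hkI
  -- pk positivity
  have hB : 0 < ∑ i ∈ Finset.range k, N i := by
    apply Finset.sum_pos
    · intro i hi; exact hN i (lt_of_lt_of_le (Finset.mem_range.mp hi) hkI)
    · exact ⟨0, Finset.mem_range.mpr hk1⟩
  have hA : 0 < ∑ i ∈ Finset.range k, N i * θ i := by
    apply Finset.sum_pos
    · intro i hi
      have hi' : i < I := lt_of_lt_of_le (Finset.mem_range.mp hi) hkI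
      exact mul_pos (hN i hi') (hθpos i hi')
    · exact ⟨0, Finset.mem_range.mpr hk1⟩
  have hden : 0 < S + ∑ i ∈ Finset.range k, N i := by linarith
  have hpk0 : 0 < pk := by rw [hpk]; exact div_pos hA hden
  -- θ i > pk for i < k
  have hlow : ∀ i < k, pk < θ i := by
    intro i hi
    rcases eq_or_lt_of_le (Nat.le_sub_one_of_lt hi) with h | h
    · rw [h]; exact hth
    · exact lt_trans hth (hθanti i (k-1) h hkI')
  -- θ i ≤ pk for k ≤ i < I
  have hhigh : ∀ i, k ≤ i → i < I → θ i ≤ pk := by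
    intro i hki hiI
    rcases hth' with h | h
    · omega
    · rcases eq_or_lt_of_le hki with h2 | h2
      · rw [← h2]; exact h
      · exact le_trans (le_of_lt (hθanti k i h2 hiI)) h
  -- the water-filling sum at pk
  have key : ∑ i ∈ Finset.range I, N i * max (θ i / pk - 1) 0 = S := by
    rw [← Finset.sum_range_add_sum_Ico _ hkI]
    have h2 : ∑ i ∈ Finset.Ico k I, N i * max (θ i / pk - 1) 0 = 0 := by
      apply Finset.sum_eq_zero
      intro i hi
      rw [Finset.mem_Ico] at hi
      have := hhigh i hi.1 hi.2
      have : θ i / pk - 1 ≤ 0 := by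
        rw [sub_nonpos, div_le_one hpk0]; exact this
      rw [max_eq_right this, mul_zero]
    have h1 : ∑ i ∈ Finset.range k, N i * max (θ i / pk - 1) 0
        = (∑ i ∈ Finset.range k, N i * θ i) / pk - ∑ i ∈ Finset.range k, N i := by
      have hc : ∑ i ∈ Finset.range k, N i * max (θ i / pk - 1) 0
          = ∑ i ∈ Finset.range k, (N i * θ i / pk - N i) := by
        apply Finset.sum_congr rfl
        intro i hi
        have hipk := hlow i (Finset.mem_range.mp hi)
        have : (0:ℝ) ≤ θ i / pk - 1 := by
          rw [sub_nonneg, le_div_iff₀ hpk0, one_mul]; exact le_of_lt hipk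
        rw [max_eq_left this]; ring
      rw [hc, Finset.sum_sub_distrib, ← Finset.sum_div]
    rw [h1, h2, add_zero, hpk, div_div_eq_mul_div, mul_comm, mul_div_assoc,
      div_self (ne_of_gt hA), mul_one]
    ring
  refine ⟨key, ?_, ?_⟩
  · -- uniqueness
    intro p' hp' hsum
    by_contra hne
    rcases lt_or_gt_of_ne hne with hlt | hgt
    · -- p' < pk : sum at p' > S
      have : S < ∑ i ∈ Finset.range I, N i * max (θ i / p' - 1) 0 := by
        rw [← key]
        apply Finset.sum_lt_sum
        · intro i hi
          have hiI := Finset.mem_range.mp hi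
          apply mul_le_mul_of_nonneg_left _ (le_of_lt (hN i hiI))
          have : θ i / pk ≤ θ i / p' :=
            div_le_div_of_nonneg_left (le_of_lt (hθpos i hiI)) hp' (le_of_lt hlt)
          exact max_le_max (by linarith) le_rfl
        · refine ⟨k - 1, Finset.mem_range.mpr hkI', ?_⟩
          apply mul_lt_mul_of_pos_left _ (hN _ hkI')
          have hθk := hlow (k-1) (Nat.sub_lt hk1 one_pos)
          have h1 : (0:ℝ) < θ (k-1) / pk - 1 := by
            rw [sub_pos, lt_div_iff₀ hpk0, one_mul]; exact hθk
          have h2 : θ (k-1) / pk < θ (k-1) / p' :=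
            div_lt_div_of_pos_left (lt_trans hpk0 hθk) hp' hlt
          rw [max_eq_left (le_of_lt h1), max_eq_left (by linarith)]
          linarith
      linarith [hsum]
    · -- p' > pk : sum at p' < S
      have : ∑ i ∈ Finset.range I, N i * max (θ i / p' - 1) 0 < S := by
        rw [← key]
        apply Finset.sum_lt_sum
        · intro i hi
          have hiI := Finset.mem_range.mp hi
          apply mul_le_mul_of_nonneg_left _ (le_of_lt (hN i hiI))
          have : θ i / p' ≤ θ i / pk :=
            div_le_div_of_nonneg_left (le_of_lt (hθpos i hiI)) hpk0 (le_of_lt hgt)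
          exact max_le_max (by linarith) le_rfl
        · refine ⟨k - 1, Finset.mem_range.mpr hkI', ?_⟩
          apply mul_lt_mul_of_pos_left _ (hN _ hkI')
          have hθk := hlow (k-1) (Nat.sub_lt hk1 one_pos)
          have h1 : (0:ℝ) < θ (k-1) / pk - 1 := by
            rw [sub_pos, lt_div_iff₀ hpk0, one_mul]; exact hθk
          have h2 : θ (k-1) / p' < θ (k-1) / pk :=
            div_lt_div_of_pos_left (lt_trans hpk0 hθk) hpk0 hgt
          rw [max_eq_left (le_of_lt h1)]
          exact max_lt (by linarith) h1
      linarith [hsum]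
  · -- cardinality
    have : (Finset.range I).filter (fun i => pk < θ i) = Finset.range k := by
      ext i
      simp only [Finset.mem_filter, Finset.mem_range]
      constructor
      · rintro ⟨hiI, hθi⟩
        by_contra h
        push_neg at h
        exact absurd hθi (not_lt.mpr (hhigh i h hiI))
      · intro hik
        exact ⟨lt_of_lt_of_le hik hkI, hlow i hik⟩
    rw [this, Finset.card_range]
end

section
/- Let θ_1 > θ_2 > … > θ_I > 0, N_1, …, N_I > 0, S > 0, and let λ > 0 satisfy ∑_{i=1}^I N_i·(√(θ_i/λ) − 1)^+ = S. Set s_i* = (√(θ_i/λ) − 1)^+ for each i. Then for every s_1, …, s_I ≥ 0 with ∑_{i=1}^I N_i·s_i ≤ S, one has ∑_{i=1}^I N_i·θ_i·s_i/(s_i+1) ≤ ∑_{i=1}^I N_i·θ_i·s_i*/(s_i*+1); i.e., the water-filling allocation maximizes the revenue function of the resource allocation subproblem. -/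
lemma pointwise_wf (t l a : ℝ) (ht : 0 < t) (hl : 0 < l) (ha : 0 ≤ a) :
    t * a / (a + 1) - l * a ≤
      t * max (Real.sqrt (t / l) - 1) 0 / (max (Real.sqrt (t / l) - 1) 0 + 1)
        - l * max (Real.sqrt (t / l) - 1) 0 := by
  set b := max (Real.sqrt (t / l) - 1) 0 with hb
  have ha1 : 0 < a + 1 := by linarith
  rcases le_or_gt t l with hle | hlt
  · -- b = 0
    have hsq : Real.sqrt (t / l) ≤ 1 :=
      Real.sqrt_le_one.mpr (by rw [div_le_one₀ hl]; exact hle)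
    have hb0 : b = 0 := max_eq_right (by linarith)
    rw [hb0]
    simp only [mul_zero, zero_div, sub_zero]
    rw [sub_nonpos, div_le_iff₀ ha1]
    nlinarith [mul_le_mul_of_nonneg_right hle ha, mul_nonneg (mul_nonneg hl.le ha) ha]
  · -- b = sqrt(t/l) - 1 > 0, and l*(b+1)^2 = t
    have htl : 1 < t / l := (one_lt_div hl).mpr hlt
    have hsq : 1 < Real.sqrt (t / l) := by
      rw [show (1:ℝ) = Real.sqrt 1 by simp]
      exact Real.sqrt_lt_sqrt (by norm_num) htl
    have hb0 : b = Real.sqrt (t / l) - 1 := by rw [hb]; simp; linarith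
    have hbpos : 0 < b := by rw [hb0]; linarith
    have hb1 : 0 < b + 1 := by linarith
    have hkey : l * (b + 1) ^ 2 = t := by
      rw [hb0]
      have : (Real.sqrt (t / l) - 1 + 1) = Real.sqrt (t / l) := by ring
      rw [this, Real.sq_sqrt (le_of_lt (lt_trans one_pos htl))]
      field_simp
    have h1 : t * a / (a + 1) ≤ l * (a + b ^ 2) := by
      rw [div_le_iff₀ ha1, ← hkey]
      nlinarith [sq_nonneg (a - b)]
    have h2 : t * b / (b + 1) = l * (b ^ 2 + b) := by
      rw [div_eq_iff (ne_of_gt hb1), ← hkey]; ring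
    rw [h2]; linarith

/-- The water-filling allocation s_i* = (√(θ_i/λ) − 1)⁺ maximizes the revenue
∑ N_i θ_i s_i/(s_i+1) among all nonnegative allocations using at most S resource.
Groups are indexed 0, …, I−1. -/
theorem water_filling_optimal (I : ℕ) (hI : 1 ≤ I) (θ N : ℕ → ℝ)
    (hθpos : ∀ i < I, 0 < θ i)
    (hθanti : ∀ i j, i < j → j < I → θ j < θ i)
    (hN : ∀ i < I, 0 < N i)
    (S : ℝ) (hS : 0 < S)
    (lam : ℝ) (hlam : 0 < lam)
    (hwf : ∑ i ∈ Finset.range I, N i * max (Real.sqrt (θ i / lam) - 1) 0 = S) :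
    ∀ s : ℕ → ℝ, (∀ i < I, 0 ≤ s i) →
      (∑ i ∈ Finset.range I, N i * s i ≤ S) →
      ∑ i ∈ Finset.range I, N i * (θ i * s i / (s i + 1)) ≤
        ∑ i ∈ Finset.range I, N i *
          (θ i * max (Real.sqrt (θ i / lam) - 1) 0 /
            (max (Real.sqrt (θ i / lam) - 1) 0 + 1)) := by
  intro s hs hsum
  have key : ∀ i ∈ Finset.range I,
      N i * (θ i * s i / (s i + 1)) - lam * (N i * s i) ≤
      N i * (θ i * max (Real.sqrt (θ i / lam) - 1) 0 /
        (max (Real.sqrt (θ i / lam) - 1) 0 + 1))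
        - lam * (N i * max (Real.sqrt (θ i / lam) - 1) 0) := by
    intro i hi
    rw [Finset.mem_range] at hi
    have hNi := hN i hi
    have hpt := pointwise_wf (θ i) lam (s i) (hθpos i hi) hlam (hs i hi)
    have := mul_le_mul_of_nonneg_left hpt (le_of_lt hNi)
    calc N i * (θ i * s i / (s i + 1)) - lam * (N i * s i)
        = N i * (θ i * s i / (s i + 1) - lam * s i) := by ring
      _ ≤ N i * (θ i * max (Real.sqrt (θ i / lam) - 1) 0 /
            (max (Real.sqrt (θ i / lam) - 1) 0 + 1)
            - lam * max (Real.sqrt (θ i / lam) - 1) 0) := this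
      _ = _ := by ring
  have hsumkey := Finset.sum_le_sum key
  rw [Finset.sum_sub_distrib, Finset.sum_sub_distrib] at hsumkey
  rw [← Finset.mul_sum, ← Finset.mul_sum, hwf] at hsumkey
  have : lam * (∑ i ∈ Finset.range I, N i * s i) ≤ lam * S :=
    mul_le_mul_of_nonneg_left hsum (le_of_lt hlam)
  linarith
end

section
/- Let θ_1 > θ_2 > … > θ_I > 0, N_1, …, N_I > 0 be integers, S > 0, let λ* be the CP water level and K = #{i : θ_i > λ*}. Then for every choice of integers n_i ∈ {0, 1, …, N_i} and prices p_i > 0 (i = 1,…,I) such that the induced demands s_i = (θ_i/p_i − 1)^+ satisfy ∑_{i=1}^I n_i·s_i ≤ S, the revenue satisfies ∑_{i=1}^I n_i·p_i·s_i ≤ ∑_{i=1}^K N_i·(θ_i − √(θ_i·λ*)). Moreover this bound is attained by taking n_i = N_i for all i, p_i = √(θ_i·λ*) for i ≤ K, and p_i = θ_i for i > K. -/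
/-!
Weak duality. Pricing a user of valuation `θ` at `p` sells `s = (θ/p - 1)⁺`, and by AM-GM
`p s ≤ λ s + ((√θ - √λ)⁺)²` for every `λ ≥ 0`: the left side minus `λ s` is `θ s/(1+s) - λ s`,
maximised at `1 + s = √(θ/λ)`. Summing over the admitted users and using the capacity constraint
bounds the revenue by `λ S + ∑ Nᵢ ((√θᵢ - √λ)⁺)²`. At the water level `λ*` the capacity `S` is
exactly the CP demand, and group by group `λ* (√(θ/λ*) - 1)⁺ + ((√θ - √λ*)⁺)²` is the CP
revenue per user, so the bound is the CP revenue, which the CP prices attain.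
-/

open Finset Real

theorem price_mul_demand_le (θ lam p : ℝ) (hlam : 0 ≤ lam) (hp : 0 < p) :
    p * max (θ / p - 1) 0 ≤ lam * max (θ / p - 1) 0 + max (√θ - √lam) 0 ^ 2 := by
  rcases le_or_gt θ p with hθp | hpθ
  · rw [max_eq_right (by rw [sub_nonpos, div_le_one hp]; exact hθp), mul_zero, mul_zero,
      zero_add]
    positivity
  have hd : θ / p - 1 = (θ - p) / p := by field_simp
  rw [max_eq_left (by rw [hd]; exact div_nonneg (by linarith) hp.le), hd,
    mul_div_cancel₀ _ hp.ne']
  rcases le_or_gt lam θ with hlθ | hθl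
  · have hq : (√θ * √lam) ^ 2 = θ * lam := by
      rw [mul_pow, sq_sqrt (by linarith), sq_sqrt hlam]
    rw [max_eq_left (sub_nonneg.mpr (sqrt_le_sqrt hlθ)), ← sub_nonneg]
    have hgap : lam * ((θ - p) / p) + (√θ - √lam) ^ 2 - (θ - p) = (p - √θ * √lam) ^ 2 / p := by
      field_simp
      rw [sub_sq, sub_sq, hq, sq_sqrt (by linarith), sq_sqrt hlam]
      ring
    rw [hgap]
    positivity
  · rw [max_eq_right (sub_nonpos.mpr (sqrt_le_sqrt hθl.le))]
    calc θ - p = p * ((θ - p) / p) := by field_simp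
      _ ≤ lam * ((θ - p) / p) + 0 ^ 2 := by
        nlinarith [div_nonneg (by linarith : (0:ℝ) ≤ θ - p) hp.le]

theorem waterLevel_demand_add_sq (θ : ℝ) {lam : ℝ} (hlam : 0 < lam) :
    lam * max (√(θ / lam) - 1) 0 + max (√θ - √lam) 0 ^ 2 =
      if lam < θ then θ - √(θ * lam) else 0 := by
  rw [sqrt_div' θ hlam.le, sqrt_mul' θ hlam.le]
  have hb : 0 < √lam := sqrt_pos.mpr hlam
  have hlam_sq : lam = √lam ^ 2 := (sq_sqrt hlam.le).symm
  split_ifs with h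
  · have hab : √lam < √θ := sqrt_lt_sqrt hlam.le h
    have hθ_sq : θ = √θ ^ 2 := (sq_sqrt (hlam.trans h).le).symm
    rw [max_eq_left (by rw [sub_nonneg, le_div_iff₀ hb]; linarith),
      max_eq_left (by linarith)]
    nth_rewrite 1 [hlam_sq]
    nth_rewrite 3 [hθ_sq]
    field_simp
    ring
  · have hab : √θ ≤ √lam := sqrt_le_sqrt (not_lt.mp h)
    rw [max_eq_right (by rw [sub_nonpos, div_le_one hb]; exact hab),
      max_eq_right (by linarith)]
    ring

theorem demand_cpPrice (θ : ℝ) {lam : ℝ} (hlam : 0 < lam) :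
    max (θ / (if lam < θ then √(θ * lam) else θ) - 1) 0 = max (√(θ / lam) - 1) 0 := by
  split_ifs with h
  · have hθ : 0 < θ := hlam.trans h
    rw [sqrt_div' θ hlam.le, sqrt_mul' θ hlam.le]
    have hb : 0 < √lam := sqrt_pos.mpr hlam
    have ha : 0 < √θ := sqrt_pos.mpr hθ
    nth_rewrite 1 [← sq_sqrt hθ.le]
    field_simp
  · rw [max_eq_right (sub_nonpos.mpr (div_self_le_one θ)),
      max_eq_right (sub_nonpos.mpr (sqrt_le_one.mpr ((div_le_one hlam).mpr (not_lt.mp h))))]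

theorem cpPrice_mul_demand (θ : ℝ) {lam : ℝ} (hlam : 0 < lam) :
    (if lam < θ then √(θ * lam) else θ) * max (θ / (if lam < θ then √(θ * lam) else θ) - 1) 0 =
      if lam < θ then θ - √(θ * lam) else 0 := by
  rw [demand_cpPrice θ hlam]
  split_ifs with h
  · have hθ : 0 < θ := hlam.trans h
    have hprice : √(θ * lam) * √(θ / lam) = θ := by
      rw [← sqrt_mul (by positivity), show θ * lam * (θ / lam) = θ ^ 2 by field_simp,
        sqrt_sq hθ.le]
    rw [max_eq_left (sub_nonneg.mpr (one_le_sqrt.mpr ((one_le_div hlam).mpr h.le))), mul_sub,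
      mul_one, hprice]
  · rw [max_eq_right (sub_nonpos.mpr (sqrt_le_one.mpr ((div_le_one hlam).mpr (not_lt.mp h)))),
      mul_zero]

theorem sum_revenue_le_of_waterLevel {ι : Type*} (s : Finset ι) (θ p n N : ι → ℝ) {lam : ℝ}
    (hlam : 0 < lam) (hn : ∀ i ∈ s, 0 ≤ n i ∧ n i ≤ N i) (hp : ∀ i ∈ s, 0 < p i)
    (hfeas : ∑ i ∈ s, n i * max (θ i / p i - 1) 0 ≤ ∑ i ∈ s, N i * max (√(θ i / lam) - 1) 0) :
    ∑ i ∈ s, n i * (p i * max (θ i / p i - 1) 0) ≤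
      ∑ i ∈ s, N i * (if lam < θ i then θ i - √(θ i * lam) else 0) :=
  calc ∑ i ∈ s, n i * (p i * max (θ i / p i - 1) 0)
      ≤ ∑ i ∈ s, (lam * (n i * max (θ i / p i - 1) 0) + N i * max (√(θ i) - √lam) 0 ^ 2) := by
        refine sum_le_sum fun i hi => ?_
        obtain ⟨hn0, hnN⟩ := hn i hi
        have hsurplus := price_mul_demand_le (θ i) lam (p i) hlam.le (hp i hi)
        have hsq : 0 ≤ max (√(θ i) - √lam) 0 ^ 2 := sq_nonneg _
        nlinarith [mul_le_mul_of_nonneg_left hsurplus hn0, mul_le_mul_of_nonneg_right hnN hsq]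
    _ ≤ ∑ i ∈ s, N i * (lam * max (√(θ i / lam) - 1) 0 + max (√(θ i) - √lam) 0 ^ 2) := by
        rw [sum_add_distrib, ← mul_sum]
        simp only [mul_add, sum_add_distrib, mul_left_comm _ lam, ← mul_sum]
        gcongr
    _ = ∑ i ∈ s, N i * (if lam < θ i then θ i - √(θ i * lam) else 0) := by
        simp only [waterLevel_demand_add_sq _ hlam]

theorem cp_scheme_optimal_general (I : ℕ) (θ : ℕ → ℝ) (N : ℕ → ℕ)
    (S : ℝ)
    (lam : ℝ) (hlam : 0 < lam)
    (hwf : ∑ i ∈ Finset.range I, (N i : ℝ) * max (Real.sqrt (θ i / lam) - 1) 0 = S) :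
    (∀ (n : ℕ → ℕ) (p : ℕ → ℝ),
      (∀ i < I, n i ≤ N i) → (∀ i < I, 0 < p i) →
      (∑ i ∈ Finset.range I, (n i : ℝ) * max (θ i / p i - 1) 0 ≤ S) →
      ∑ i ∈ Finset.range I, (n i : ℝ) * (p i * max (θ i / p i - 1) 0) ≤
        ∑ i ∈ (Finset.range I).filter (fun i => lam < θ i),
          (N i : ℝ) * (θ i - Real.sqrt (θ i * lam))) ∧
    ((∑ i ∈ Finset.range I,
        (N i : ℝ) * max (θ i / (if lam < θ i then Real.sqrt (θ i * lam) else θ i) - 1) 0 ≤ S) ∧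
      ∑ i ∈ Finset.range I,
        (N i : ℝ) * ((if lam < θ i then Real.sqrt (θ i * lam) else θ i) *
          max (θ i / (if lam < θ i then Real.sqrt (θ i * lam) else θ i) - 1) 0) =
        ∑ i ∈ (Finset.range I).filter (fun i => lam < θ i),
          (N i : ℝ) * (θ i - Real.sqrt (θ i * lam))) := by
  have hcp : ∑ i ∈ (range I).filter (fun i => lam < θ i), (N i : ℝ) * (θ i - √(θ i * lam)) =
      ∑ i ∈ range I, (N i : ℝ) * (if lam < θ i then θ i - √(θ i * lam) else 0) := by
    simp only [sum_filter, mul_ite, mul_zero]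
  refine ⟨fun n p hn hp hfeas => ?_, ?_, ?_⟩
  · rw [hcp]
    exact sum_revenue_le_of_waterLevel _ θ p (fun i => n i) (fun i => N i) hlam
      (fun i hi => ⟨Nat.cast_nonneg _, Nat.cast_le.mpr (hn i (mem_range.mp hi))⟩)
      (fun i hi => hp i (mem_range.mp hi)) (hfeas.trans hwf.ge)
  · simp only [demand_cpPrice _ hlam, hwf, le_refl]
  · simp only [cpPrice_mul_demand _ hlam, hcp]

/-- Optimality of the complete price differentiation (CP) scheme: for any feasible
admission numbers n_i ≤ N_i and prices p_i > 0 with induced demands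
s_i = (θ_i/p_i − 1)⁺ satisfying ∑ n_i s_i ≤ S, the revenue ∑ n_i p_i s_i is at
most ∑_{i : θ_i > λ*} N_i (θ_i − √(θ_i λ*)), where λ* is the CP water level;
moreover this bound is attained by admitting everyone and charging
p_i = √(θ_i λ*) to effective groups and p_i = θ_i to the rest.
Groups are indexed 0, …, I−1. -/
theorem cp_scheme_optimal (I : ℕ) (hI : 1 ≤ I) (θ : ℕ → ℝ) (N : ℕ → ℕ)
    (hθpos : ∀ i < I, 0 < θ i)
    (hθanti : ∀ i j, i < j → j < I → θ j < θ i)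
    (hN : ∀ i < I, 0 < N i)
    (S : ℝ) (hS : 0 < S)
    (lam : ℝ) (hlam : 0 < lam)
    (hwf : ∑ i ∈ Finset.range I, (N i : ℝ) * max (Real.sqrt (θ i / lam) - 1) 0 = S) :
    (∀ (n : ℕ → ℕ) (p : ℕ → ℝ),
      (∀ i < I, n i ≤ N i) → (∀ i < I, 0 < p i) →
      (∑ i ∈ Finset.range I, (n i : ℝ) * max (θ i / p i - 1) 0 ≤ S) →
      ∑ i ∈ Finset.range I, (n i : ℝ) * (p i * max (θ i / p i - 1) 0) ≤
        ∑ i ∈ (Finset.range I).filter (fun i => lam < θ i),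
          (N i : ℝ) * (θ i - Real.sqrt (θ i * lam))) ∧
    ((∑ i ∈ Finset.range I,
        (N i : ℝ) * max (θ i / (if lam < θ i then Real.sqrt (θ i * lam) else θ i) - 1) 0 ≤ S) ∧
      ∑ i ∈ Finset.range I,
        (N i : ℝ) * ((if lam < θ i then Real.sqrt (θ i * lam) else θ i) *
          max (θ i / (if lam < θ i then Real.sqrt (θ i * lam) else θ i) - 1) 0) =
        ∑ i ∈ (Finset.range I).filter (fun i => lam < θ i),
          (N i : ℝ) * (θ i - Real.sqrt (θ i * lam))) :=
  cp_scheme_optimal_general I θ N S lam hlam hwf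
end

section
/- Let θ_1 > θ_2 > … > θ_I > 0, N_1, …, N_I > 0, S > 0, let λ* be the CP water level and K = #{i : θ_i > λ*}. Then λ* = (∑_{i=1}^K N_i·√θ_i / (S + ∑_{i=1}^K N_i))², and the optimal CP revenue satisfies ∑_{i=1}^K N_i·(θ_i − √(θ_i·λ*)) = ∑_{i=1}^K N_i·θ_i − (∑_{i=1}^K N_i·√θ_i)² / (S + ∑_{i=1}^K N_i). -/
/-- Closed form of the CP water level and of the optimal CP revenue in terms of the
effective market {i : θ_i > λ*}. Groups are indexed 0, …, I−1. -/
theorem cp_water_level_closed_form (I : ℕ) (hI : 1 ≤ I) (θ N : ℕ → ℝ)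
    (hθpos : ∀ i < I, 0 < θ i)
    (hθanti : ∀ i j, i < j → j < I → θ j < θ i)
    (hN : ∀ i < I, 0 < N i)
    (S : ℝ) (hS : 0 < S)
    (lam : ℝ) (hlam : 0 < lam)
    (hwf : ∑ i ∈ Finset.range I, N i * max (Real.sqrt (θ i / lam) - 1) 0 = S) :
    lam = ((∑ i ∈ (Finset.range I).filter (fun i => lam < θ i), N i * Real.sqrt (θ i)) /
        (S + ∑ i ∈ (Finset.range I).filter (fun i => lam < θ i), N i)) ^ 2 ∧
    ∑ i ∈ (Finset.range I).filter (fun i => lam < θ i),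
        N i * (θ i - Real.sqrt (θ i * lam)) =
      (∑ i ∈ (Finset.range I).filter (fun i => lam < θ i), N i * θ i) -
        (∑ i ∈ (Finset.range I).filter (fun i => lam < θ i), N i * Real.sqrt (θ i)) ^ 2 /
          (S + ∑ i ∈ (Finset.range I).filter (fun i => lam < θ i), N i) := by
  set F := (Finset.range I).filter (fun i => lam < θ i) with hF
  set A := ∑ i ∈ F, N i * Real.sqrt (θ i) with hA
  set B := ∑ i ∈ F, N i with hB
  have hsl : 0 < Real.sqrt lam := Real.sqrt_pos.2 hlam
  -- rewrite the water-filling sum over the filtered set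
  have hsum : A / Real.sqrt lam - B = S := by
    have h1 : ∀ i ∈ Finset.range I,
        N i * max (Real.sqrt (θ i / lam) - 1) 0 =
          if lam < θ i then N i * (Real.sqrt (θ i) / Real.sqrt lam - 1) else 0 := by
      intro i hi
      have hiI : i < I := Finset.mem_range.1 hi
      have hθi := hθpos i hiI
      have hsq : Real.sqrt (θ i / lam) = Real.sqrt (θ i) / Real.sqrt lam :=
        Real.sqrt_div hθi.le lam
      by_cases h : lam < θ i
      · have h2 : (1:ℝ) < θ i / lam := (one_lt_div hlam).2 h
        have h3 : (1:ℝ) < Real.sqrt (θ i / lam) := by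
          have := Real.sqrt_lt_sqrt (by norm_num) h2
          simpa using this
        rw [if_pos h, max_eq_left (by linarith), hsq]
      · have h2 : θ i / lam ≤ 1 := (div_le_one hlam).2 (not_lt.1 h)
        have h3 : Real.sqrt (θ i / lam) ≤ 1 := by
          have := Real.sqrt_le_sqrt h2
          simpa using this
        rw [if_neg h, max_eq_right (by linarith), mul_zero]
    calc A / Real.sqrt lam - B
        = ∑ i ∈ F, N i * (Real.sqrt (θ i) / Real.sqrt lam - 1) := by
          rw [hA, hB, Finset.sum_div, ← Finset.sum_sub_distrib]
          apply Finset.sum_congr rfl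
          intro i _
          field_simp
      _ = ∑ i ∈ Finset.range I,
            (if lam < θ i then N i * (Real.sqrt (θ i) / Real.sqrt lam - 1) else 0) :=
          (Finset.sum_filter _ _)
      _ = S := by rw [← hwf]; exact (Finset.sum_congr rfl fun i hi => (h1 i hi).symm)
  have hBnn : 0 ≤ B := Finset.sum_nonneg fun i hi => by
    exact (hN i (Finset.mem_range.1 (Finset.mem_filter.1 hi).1)).le
  have hSB : 0 < S + B := by linarith
  have hAeq : A = Real.sqrt lam * (S + B) := by
    have : A / Real.sqrt lam = S + B := by linarith
    field_simp at this
    linarith [this]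
  have hsqlam : Real.sqrt lam = A / (S + B) := by
    rw [hAeq]; field_simp
  have hlam_eq : lam = (A / (S + B)) ^ 2 := by
    rw [← hsqlam, Real.sq_sqrt hlam.le]
  refine ⟨hlam_eq, ?_⟩
  have h2 : ∑ i ∈ F, N i * (θ i - Real.sqrt (θ i * lam)) =
      (∑ i ∈ F, N i * θ i) - Real.sqrt lam * A := by
    rw [hA, Finset.mul_sum, ← Finset.sum_sub_distrib]
    apply Finset.sum_congr rfl
    intro i hi
    have hθi := hθpos i (Finset.mem_range.1 (Finset.mem_filter.1 hi).1)
    rw [Real.sqrt_mul hθi.le]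
    ring
  rw [h2, hsqlam]
  ring
end

section
/- Let θ_1 > θ_2 > … > θ_I > 0, N_1, …, N_I > 0 be integers, S > 0, let p* be the optimal single price and K = #{i : θ_i > p*}. Then for every single price p > 0 and integers n_i ∈ {0, 1, …, N_i} such that the demands s_i = (θ_i/p − 1)^+ satisfy ∑_{i=1}^I n_i·s_i ≤ S, the revenue satisfies p·∑_{i=1}^I n_i·s_i ≤ p*·S = S·∑_{i=1}^K N_i·θ_i / (S + ∑_{i=1}^K N_i). Moreover this bound is attained by taking p = p* and n_i = N_i for all i. -/
lemma sp_pmax (p t : ℝ) (hp : 0 < p) : p * max (t / p - 1) 0 = max (t - p) 0 := by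
  rw [mul_max_of_nonneg _ _ hp.le, mul_zero]
  congr 1
  field_simp

/-- Optimality of the single pricing (SP) scheme: for any single price p > 0 and
admission numbers n_i ≤ N_i with demands s_i = (θ_i/p − 1)⁺ satisfying
∑ n_i s_i ≤ S, the revenue p ∑ n_i s_i is at most p*·S, where p* is the optimal
single price, and p*·S = S ∑_{i : θ_i > p*} N_i θ_i / (S + ∑_{i : θ_i > p*} N_i);
moreover the bound is attained by p = p* and n_i = N_i.
Groups are indexed 0, …, I−1. -/
theorem sp_scheme_optimal (I : ℕ) (hI : 1 ≤ I) (θ : ℕ → ℝ) (N : ℕ → ℕ)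
    (hθpos : ∀ i < I, 0 < θ i)
    (hθanti : ∀ i j, i < j → j < I → θ j < θ i)
    (hN : ∀ i < I, 0 < N i)
    (S : ℝ) (hS : 0 < S)
    (pstar : ℝ) (hpstar : 0 < pstar)
    (hwf : ∑ i ∈ Finset.range I, (N i : ℝ) * max (θ i / pstar - 1) 0 = S) :
    (∀ (p : ℝ) (n : ℕ → ℕ), 0 < p → (∀ i < I, n i ≤ N i) →
      (∑ i ∈ Finset.range I, (n i : ℝ) * max (θ i / p - 1) 0 ≤ S) →
      p * ∑ i ∈ Finset.range I, (n i : ℝ) * max (θ i / p - 1) 0 ≤ pstar * S) ∧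
    (pstar * S =
      S * (∑ i ∈ (Finset.range I).filter (fun i => pstar < θ i), (N i : ℝ) * θ i) /
        (S + ∑ i ∈ (Finset.range I).filter (fun i => pstar < θ i), (N i : ℝ))) ∧
    (pstar * ∑ i ∈ Finset.range I, (N i : ℝ) * max (θ i / pstar - 1) 0 = pstar * S) := by
  -- transform : p * ∑ m_i (θ_i/p - 1)⁺ = ∑ m_i (θ_i - p)⁺
  have transform : ∀ (p : ℝ), 0 < p → ∀ (m : ℕ → ℕ),
      p * ∑ i ∈ Finset.range I, (m i : ℝ) * max (θ i / p - 1) 0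
        = ∑ i ∈ Finset.range I, (m i : ℝ) * max (θ i - p) 0 := by
    intro p hp m
    rw [Finset.mul_sum]
    refine Finset.sum_congr rfl fun i _ => ?_
    rw [← sp_pmax p (θ i) hp]; ring
  have hNfull : pstar * S = ∑ i ∈ Finset.range I, (N i : ℝ) * max (θ i - pstar) 0 := by
    rw [← hwf, transform pstar hpstar N]
  set A := ∑ i ∈ (Finset.range I).filter (fun i => pstar < θ i), (N i : ℝ) * θ i with hA
  set B := ∑ i ∈ (Finset.range I).filter (fun i => pstar < θ i), (N i : ℝ) with hB
  have hBnn : 0 ≤ B := Finset.sum_nonneg fun i _ => Nat.cast_nonneg _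
  have hkey : pstar * S = A - pstar * B := by
    rw [hNfull]
    have h1 : ∑ i ∈ Finset.range I, (N i : ℝ) * max (θ i - pstar) 0
        = ∑ i ∈ (Finset.range I).filter (fun i => pstar < θ i),
            ((N i : ℝ) * θ i - pstar * (N i : ℝ)) := by
      rw [← Finset.sum_filter_of_ne (p := fun i => pstar < θ i)]
      · refine Finset.sum_congr rfl fun i hi => ?_
        rw [Finset.mem_filter] at hi
        rw [max_eq_left (by linarith [hi.2])]
        ring
      · intro i _ hne
        by_contra h
        push_neg at h
        exact hne (by rw [max_eq_right (by linarith), mul_zero])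
    rw [h1, Finset.sum_sub_distrib, ← Finset.mul_sum, ← hA, ← hB]
  refine ⟨?_, ?_, by rw [hwf]⟩
  · intro p n hp hn hcon
    rcases le_or_gt p pstar with hle | hlt
    · calc p * ∑ i ∈ Finset.range I, (n i : ℝ) * max (θ i / p - 1) 0
          ≤ p * S := mul_le_mul_of_nonneg_left hcon hp.le
        _ ≤ pstar * S := mul_le_mul_of_nonneg_right hle hS.le
    · rw [transform p hp n, hNfull]
      refine Finset.sum_le_sum fun i hi => ?_
      have hni : (n i : ℝ) ≤ (N i : ℝ) := by
        exact_mod_cast hn i (Finset.mem_range.mp hi)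
      exact mul_le_mul hni (max_le_max (by linarith) le_rfl) (le_max_right _ _)
        (Nat.cast_nonneg _)
  · have hSB : 0 < S + B := by linarith
    rw [eq_div_iff hSB.ne']
    linear_combination S * hkey
end

section
/- Let θ_1 > θ_2 > … > θ_I > 0, N_1, …, N_I > 0, S > 0, let λ* be the CP water level and p* the optimal single price. Then the SP effective market is no larger than the CP effective market: #{i : θ_i > p*} ≤ #{i : θ_i > λ*}. -/
/-- The effective market of the single pricing scheme is no larger than the one of
the complete price differentiation scheme: #{i : θ_i > p*} ≤ #{i : θ_i > λ*}.
Groups are indexed 0, …, I−1. -/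
theorem sp_effective_market_le_cp (I : ℕ) (hI : 1 ≤ I) (θ N : ℕ → ℝ)
    (hθpos : ∀ i < I, 0 < θ i)
    (hθanti : ∀ i j, i < j → j < I → θ j < θ i)
    (hN : ∀ i < I, 0 < N i)
    (S : ℝ) (hS : 0 < S)
    (lam : ℝ) (hlam : 0 < lam)
    (hwfcp : ∑ i ∈ Finset.range I, N i * max (Real.sqrt (θ i / lam) - 1) 0 = S)
    (pstar : ℝ) (hpstar : 0 < pstar)
    (hwfsp : ∑ i ∈ Finset.range I, N i * max (θ i / pstar - 1) 0 = S) :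
    ((Finset.range I).filter (fun i => pstar < θ i)).card ≤
      ((Finset.range I).filter (fun i => lam < θ i)).card := by
  have hle : lam ≤ pstar := by
    by_contra h
    push_neg at h
    -- some CP term is positive
    have hex : ∃ i ∈ Finset.range I,
        (0:ℝ) < N i * max (Real.sqrt (θ i / lam) - 1) 0 := by
      by_contra hc
      push_neg at hc
      have : ∑ i ∈ Finset.range I, N i * max (Real.sqrt (θ i / lam) - 1) 0 ≤ 0 :=
        Finset.sum_nonpos hc
      linarith
    obtain ⟨i0, hi0, hpos0⟩ := hex
    have key : ∀ i ∈ Finset.range I,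
        N i * max (Real.sqrt (θ i / lam) - 1) 0 ≤ N i * max (θ i / pstar - 1) 0 := by
      intro i hi
      rw [Finset.mem_range] at hi
      have hNi := (hN i hi).le
      rcases le_or_gt (Real.sqrt (θ i / lam)) 1 with hs | hs
      · have h1 : max (Real.sqrt (θ i / lam) - 1) 0 = 0 := by
          apply max_eq_right; linarith
        rw [h1, mul_zero]
        exact mul_nonneg hNi (le_max_right _ _)
      · have hθi := hθpos i hi
        have hrat : 1 < θ i / lam := by
          nlinarith [Real.sq_sqrt (div_nonneg hθi.le hlam.le)]
        have hsq_le : Real.sqrt (θ i / lam) ≤ θ i / lam := by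
          have := Real.sqrt_le_sqrt (le_of_lt (by
            nlinarith : θ i / lam < (θ i / lam)^2))
          calc Real.sqrt (θ i / lam) ≤ Real.sqrt ((θ i / lam)^2) := this
            _ = θ i / lam := by
                rw [Real.sqrt_sq (by linarith : (0:ℝ) ≤ θ i / lam)]
        have hdiv : θ i / lam < θ i / pstar :=
          div_lt_div_of_pos_left hθi hpstar h
        have h2 : max (Real.sqrt (θ i / lam) - 1) 0 ≤ max (θ i / pstar - 1) 0 := by
          apply max_le_max _ le_rfl
          linarith
        exact mul_le_mul_of_nonneg_left h2 hNi
    have strict : N i0 * max (Real.sqrt (θ i0 / lam) - 1) 0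
        < N i0 * max (θ i0 / pstar - 1) 0 := by
      rw [Finset.mem_range] at hi0
      have hNi := hN i0 hi0
      have hθi := hθpos i0 hi0
      have hm : 0 < max (Real.sqrt (θ i0 / lam) - 1) 0 := by
        by_contra hc
        push_neg at hc
        have : max (Real.sqrt (θ i0 / lam) - 1) 0 = 0 :=
          le_antisymm hc (le_max_right _ _)
        rw [this, mul_zero] at hpos0
        exact lt_irrefl _ hpos0
      have hs : 1 < Real.sqrt (θ i0 / lam) := by
        rcases max_cases (Real.sqrt (θ i0 / lam) - 1) 0 with ⟨he, _⟩ | ⟨he, _⟩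
        · rw [he] at hm; linarith
        · rw [he] at hm; exact absurd hm (lt_irrefl 0)
      have hrat : 1 < θ i0 / lam := by
        nlinarith [Real.sq_sqrt (div_nonneg hθi.le hlam.le)]
      have hsq_le : Real.sqrt (θ i0 / lam) ≤ θ i0 / lam := by
        have := Real.sqrt_le_sqrt (le_of_lt (by
          nlinarith : θ i0 / lam < (θ i0 / lam)^2))
        calc Real.sqrt (θ i0 / lam) ≤ Real.sqrt ((θ i0 / lam)^2) := this
          _ = θ i0 / lam := by
              rw [Real.sqrt_sq (by linarith : (0:ℝ) ≤ θ i0 / lam)]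
      have hdiv : θ i0 / lam < θ i0 / pstar :=
        div_lt_div_of_pos_left hθi hpstar h
      have h1 : max (Real.sqrt (θ i0 / lam) - 1) 0 = Real.sqrt (θ i0 / lam) - 1 :=
        max_eq_left (by linarith)
      have h2 : max (θ i0 / pstar - 1) 0 = θ i0 / pstar - 1 :=
        max_eq_left (by linarith)
      rw [h1, h2]
      apply mul_lt_mul_of_pos_left _ hNi
      linarith
    have hsum : ∑ i ∈ Finset.range I, N i * max (Real.sqrt (θ i / lam) - 1) 0
        < ∑ i ∈ Finset.range I, N i * max (θ i / pstar - 1) 0 :=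
      Finset.sum_lt_sum key ⟨i0, hi0, strict⟩
    rw [hwfcp, hwfsp] at hsum
    exact lt_irrefl _ hsum
  apply Finset.card_le_card
  intro i hi
  simp only [Finset.mem_filter] at hi ⊢
  exact ⟨hi.1, lt_of_le_of_lt hle hi.2⟩
end

section
/- Let θ_1 > θ_2 > … > θ_I > 0, N_1, …, N_I > 0, S > 0, let λ* be the CP water level with K^cp = #{i : θ_i > λ*}, and let p* be the optimal single price. Then the optimal CP revenue is at least the optimal SP revenue: ∑_{i=1}^{K^cp} N_i·(θ_i − √(θ_i·λ*)) ≥ p*·S, with equality if and only if K^cp = 1. -/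
/-!
A user of type `θ` allotted `x` units pays at most `θ / (1 + x)`, the price at which he demands
exactly `x`; so an allocation `x` yields the strictly concave revenue `θ x / (1 + x)`. The CP
water level `λ` is the Lagrange multiplier of the budget `∑ N x = S`: for every group,
`θ x / (1 + x) - λ x` is maximised exactly at the CP allocation `(√(θ / λ) - 1)⁺`. The SP
allocation `(θ / p - 1)⁺` meets the same budget and yields `p S`, hence `p S` is at most the CP
revenue, with equality iff the two allocations coincide. They coincide on a group with `θ > λ`
only if `p = √(θ λ)`, i.e. `θ = p² / λ`, so at most one group is effective. Conversely, a single
effective group's CP price `√(θ λ)` clears the SP market, and it is the SP price because total SP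
demand is strictly decreasing in the price.
-/

open Finset

noncomputable def spDemand (p a : ℝ) : ℝ := max (a / p - 1) 0

noncomputable def cpDemand (lam a : ℝ) : ℝ := max (√(a / lam) - 1) 0

noncomputable def allocRevenue (a x : ℝ) : ℝ := a * x / (1 + x)

section SingleGroup

variable {lam p q a x : ℝ}

lemma one_lt_sqrt_div (hlam : 0 < lam) (ha : lam < a) : 1 < √(a / lam) :=
  (Real.lt_sqrt zero_le_one).2 (by rw [one_pow]; exact (one_lt_div hlam).2 ha)

lemma div_sqrt_div_eq_sqrt_mul (hlam : 0 < lam) (ha : 0 < a) :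
    a / √(a / lam) = √(a * lam) := by
  rw [div_eq_iff (Real.sqrt_pos.2 (div_pos ha hlam)).ne', ← Real.sqrt_mul (by positivity),
    show a * lam * (a / lam) = a ^ 2 by field_simp, Real.sqrt_sq ha.le]

lemma cpDemand_of_lt (hlam : 0 < lam) (ha : lam < a) : cpDemand lam a = √(a / lam) - 1 :=
  max_eq_left (by linarith [one_lt_sqrt_div hlam ha])

lemma cpDemand_eq_zero_of_le (hlam : 0 < lam) (ha : a ≤ lam) : cpDemand lam a = 0 :=
  max_eq_right (sub_nonpos.2 (Real.sqrt_le_one.2 ((div_le_one hlam).2 ha)))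

lemma spDemand_of_le (hp : 0 < p) (ha : p ≤ a) : spDemand p a = a / p - 1 :=
  max_eq_left (sub_nonneg.2 ((one_le_div hp).2 ha))

lemma spDemand_eq_zero_of_le (hp : 0 < p) (ha : a ≤ p) : spDemand p a = 0 :=
  max_eq_right (sub_nonpos.2 ((div_le_one hp).2 ha))

lemma allocRevenue_spDemand (hp : 0 < p) : allocRevenue a (spDemand p a) = p * spDemand p a := by
  rcases le_or_gt a p with ha | ha
  · simp [spDemand_eq_zero_of_le hp ha, allocRevenue]
  · rw [spDemand_of_le hp ha.le, allocRevenue]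
    field_simp
    ring

lemma allocRevenue_cpDemand (hlam : 0 < lam) :
    allocRevenue a (cpDemand lam a) = if lam < a then a - √(a * lam) else 0 := by
  split_ifs with ha
  · rw [cpDemand_of_lt hlam ha, allocRevenue, add_sub_cancel, mul_sub, mul_one, sub_div,
      mul_div_cancel_right₀ _ (zero_lt_one.trans (one_lt_sqrt_div hlam ha)).ne',
      div_sqrt_div_eq_sqrt_mul hlam (hlam.trans ha)]
  · simp [cpDemand_eq_zero_of_le hlam (not_lt.1 ha), allocRevenue]

lemma lagrangian_gap_of_lt (hlam : 0 < lam) (ha : lam < a) (hx : 0 ≤ x) :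
    (allocRevenue a (cpDemand lam a) - lam * cpDemand lam a) - (allocRevenue a x - lam * x) =
      lam * (x - cpDemand lam a) ^ 2 / (1 + x) := by
  rw [cpDemand_of_lt hlam ha, allocRevenue, allocRevenue, add_sub_cancel]
  have ha' : a = lam * √(a / lam) ^ 2 := by
    rw [Real.sq_sqrt (div_pos (hlam.trans ha) hlam).le]; field_simp
  generalize √(a / lam) = s at ha' ⊢
  subst ha'
  field_simp
  ring

lemma lagrangian_gap_of_le (hlam : 0 < lam) (ha : a ≤ lam) (hx : 0 ≤ x) :
    (allocRevenue a (cpDemand lam a) - lam * cpDemand lam a) - (allocRevenue a x - lam * x) =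
      x * (lam * (1 + x) - a) / (1 + x) := by
  rw [cpDemand_eq_zero_of_le hlam ha, allocRevenue, allocRevenue]
  field_simp
  ring

lemma lagrangian_le (hlam : 0 < lam) (hx : 0 ≤ x) :
    allocRevenue a x - lam * x ≤ allocRevenue a (cpDemand lam a) - lam * cpDemand lam a := by
  rw [← sub_nonneg]
  rcases lt_or_ge lam a with ha | ha
  · rw [lagrangian_gap_of_lt hlam ha hx]; positivity
  · rw [lagrangian_gap_of_le hlam ha hx]
    have : 0 ≤ lam * (1 + x) - a := by nlinarith
    positivity

lemma lagrangian_eq_iff (hlam : 0 < lam) (hx : 0 ≤ x) :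
    allocRevenue a x - lam * x = allocRevenue a (cpDemand lam a) - lam * cpDemand lam a ↔
      x = cpDemand lam a := by
  rw [eq_comm, ← sub_eq_zero]
  have h1x : 1 + x ≠ 0 := by positivity
  rcases lt_or_ge lam a with ha | ha
  · rw [lagrangian_gap_of_lt hlam ha hx, div_eq_zero_iff, or_iff_left h1x, mul_eq_zero,
      or_iff_right hlam.ne', pow_eq_zero_iff two_ne_zero, sub_eq_zero]
  · rw [lagrangian_gap_of_le hlam ha hx, cpDemand_eq_zero_of_le hlam ha, div_eq_zero_iff,
      or_iff_left h1x, mul_eq_zero]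
    refine ⟨fun h => h.elim id fun h => ?_, Or.inl⟩
    nlinarith

lemma spDemand_le_of_le (hp : 0 < p) (hpq : p ≤ q) : spDemand q a ≤ spDemand p a := by
  rcases le_or_gt a q with ha | ha
  · rw [spDemand_eq_zero_of_le (hp.trans_le hpq) ha]
    exact le_max_right _ _
  · rw [spDemand_of_le (hp.trans_le hpq) ha.le, spDemand_of_le hp (hpq.trans ha.le)]
    gcongr
    linarith

lemma spDemand_lt_of_lt (hp : 0 < p) (hpq : p < q) (hpos : 0 < spDemand q a) :
    spDemand q a < spDemand p a := by
  have ha : q < a := not_le.1 fun ha => hpos.ne' (spDemand_eq_zero_of_le (hp.trans hpq) ha)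
  rw [spDemand_of_le (hp.trans hpq) ha.le, spDemand_of_le hp (hpq.trans ha).le]
  gcongr
  linarith

lemma spDemand_sqrt_mul_eq_cpDemand (hlam : 0 < lam) (ha : lam < a) :
    spDemand √(a * lam) a = cpDemand lam a := by
  have hq : 0 < √(a * lam) := Real.sqrt_pos.2 (by nlinarith)
  have hqa : √(a * lam) ≤ a := (Real.sqrt_le_left (by linarith)).2 (by nlinarith)
  rw [spDemand_of_le hq hqa, cpDemand_of_lt hlam ha,
    ← div_sqrt_div_eq_sqrt_mul hlam (hlam.trans ha), div_div_cancel₀ (hlam.trans ha).ne']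

lemma eq_sq_div_of_spDemand_eq_cpDemand (hlam : 0 < lam) (hp : 0 < p) (ha : lam < a)
    (h : spDemand p a = cpDemand lam a) : a = p ^ 2 / lam := by
  have hpa : p ≤ a := by
    by_contra! hap
    rw [spDemand_eq_zero_of_le hp hap.le, cpDemand_of_lt hlam ha] at h
    linarith [one_lt_sqrt_div hlam ha]
  rw [spDemand_of_le hp hpa, cpDemand_of_lt hlam ha, sub_left_inj] at h
  have hsq : (a / p) ^ 2 = a / lam := by rw [h, Real.sq_sqrt (div_pos (hlam.trans ha) hlam).le]
  field_simp at hsq ⊢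
  nlinarith

end SingleGroup

section Market

variable {ι : Type*} {s : Finset ι} {N θ x : ι → ℝ} {lam p q : ℝ}

lemma sum_allocRevenue_cpDemand_sub
    (hbudget : ∑ i ∈ s, N i * x i = ∑ i ∈ s, N i * cpDemand lam (θ i)) :
    ∑ i ∈ s, N i * allocRevenue (θ i) (cpDemand lam (θ i)) -
        ∑ i ∈ s, N i * allocRevenue (θ i) (x i) =
      ∑ i ∈ s, N i * ((allocRevenue (θ i) (cpDemand lam (θ i)) - lam * cpDemand lam (θ i)) -
        (allocRevenue (θ i) (x i) - lam * x i)) := by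
  simp only [mul_sub, sum_sub_distrib, mul_left_comm _ lam, ← mul_sum, hbudget]
  ring

lemma sum_allocRevenue_le_cpDemand (hlam : 0 < lam) (hN : ∀ i ∈ s, 0 ≤ N i)
    (hx : ∀ i ∈ s, 0 ≤ x i)
    (hbudget : ∑ i ∈ s, N i * x i = ∑ i ∈ s, N i * cpDemand lam (θ i)) :
    ∑ i ∈ s, N i * allocRevenue (θ i) (x i) ≤
      ∑ i ∈ s, N i * allocRevenue (θ i) (cpDemand lam (θ i)) := by
  rw [← sub_nonneg, sum_allocRevenue_cpDemand_sub hbudget]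
  exact sum_nonneg fun i hi => mul_nonneg (hN i hi) (sub_nonneg.2 (lagrangian_le hlam (hx i hi)))

lemma sum_allocRevenue_eq_cpDemand_iff (hlam : 0 < lam) (hN : ∀ i ∈ s, 0 < N i)
    (hx : ∀ i ∈ s, 0 ≤ x i)
    (hbudget : ∑ i ∈ s, N i * x i = ∑ i ∈ s, N i * cpDemand lam (θ i)) :
    ∑ i ∈ s, N i * allocRevenue (θ i) (x i) =
        ∑ i ∈ s, N i * allocRevenue (θ i) (cpDemand lam (θ i)) ↔
      ∀ i ∈ s, x i = cpDemand lam (θ i) := by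
  rw [eq_comm, ← sub_eq_zero, sum_allocRevenue_cpDemand_sub hbudget,
    sum_eq_zero_iff_of_nonneg fun i hi =>
      mul_nonneg (hN i hi).le (sub_nonneg.2 (lagrangian_le hlam (hx i hi)))]
  refine forall₂_congr fun i hi => ?_
  rw [mul_eq_zero, or_iff_right (hN i hi).ne', sub_eq_zero, eq_comm,
    lagrangian_eq_iff hlam (hx i hi)]

lemma sum_spDemand_lt_of_lt (hN : ∀ i ∈ s, 0 ≤ N i) (hp : 0 < p) (hpq : p < q)
    (hpos : 0 < ∑ i ∈ s, N i * spDemand q (θ i)) :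
    ∑ i ∈ s, N i * spDemand q (θ i) < ∑ i ∈ s, N i * spDemand p (θ i) := by
  obtain ⟨i, hi, hpos_i⟩ := exists_lt_of_sum_lt (f := fun _ => (0 : ℝ)) (by simpa using hpos)
  refine sum_lt_sum
    (fun j hj => mul_le_mul_of_nonneg_left (spDemand_le_of_le hp hpq.le) (hN j hj)) ⟨i, hi, ?_⟩
  exact mul_lt_mul_of_pos_left (spDemand_lt_of_lt hp hpq (pos_of_mul_pos_right hpos_i (hN i hi)))
    (pos_of_mul_pos_left hpos_i (le_max_right _ _))

lemma eq_of_sum_spDemand_eq (hN : ∀ i ∈ s, 0 ≤ N i) (hp : 0 < p) (hq : 0 < q)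
    (hpos : 0 < ∑ i ∈ s, N i * spDemand p (θ i))
    (h : ∑ i ∈ s, N i * spDemand p (θ i) = ∑ i ∈ s, N i * spDemand q (θ i)) : p = q := by
  rcases lt_trichotomy p q with hpq | hpq | hpq
  · exact absurd h.symm (sum_spDemand_lt_of_lt hN hp hpq (h ▸ hpos)).ne
  · exact hpq
  · exact absurd h (sum_spDemand_lt_of_lt hN hq hpq hpos).ne

lemma exists_lt_of_sum_cpDemand_pos (hlam : 0 < lam)
    (hpos : 0 < ∑ i ∈ s, N i * cpDemand lam (θ i)) : ∃ i ∈ s, lam < θ i := by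
  by_contra! h
  rw [sum_eq_zero fun i hi => by rw [cpDemand_eq_zero_of_le hlam (h i hi), mul_zero]] at hpos
  exact hpos.false

lemma card_filter_lt_eq_one_of_spDemand_eq_cpDemand (hlam : 0 < lam) (hp : 0 < p)
    (hinj : Set.InjOn θ s) (hpos : 0 < ∑ i ∈ s, N i * cpDemand lam (θ i))
    (h : ∀ i ∈ s, spDemand p (θ i) = cpDemand lam (θ i)) :
    (s.filter fun i => lam < θ i).card = 1 := by
  obtain ⟨i, hi, hlt⟩ := exists_lt_of_sum_cpDemand_pos hlam hpos
  refine le_antisymm (card_le_one.2 fun i hi j hj => ?_)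
    (card_pos.2 ⟨i, mem_filter.2 ⟨hi, hlt⟩⟩)
  rw [mem_filter] at hi hj
  exact hinj hi.1 hj.1 ((eq_sq_div_of_spDemand_eq_cpDemand hlam hp hi.2 (h i hi.1)).trans
    (eq_sq_div_of_spDemand_eq_cpDemand hlam hp hj.2 (h j hj.1)).symm)

lemma spDemand_eq_cpDemand_of_card_filter_eq_one (hlam : 0 < lam) (hp : 0 < p)
    (hN : ∀ i ∈ s, 0 ≤ N i) (hpos : 0 < ∑ i ∈ s, N i * cpDemand lam (θ i))
    (hbudget : ∑ i ∈ s, N i * spDemand p (θ i) = ∑ i ∈ s, N i * cpDemand lam (θ i))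
    (hcard : (s.filter fun i => lam < θ i).card = 1) :
    ∀ i ∈ s, spDemand p (θ i) = cpDemand lam (θ i) := by
  obtain ⟨i₀, hF⟩ := card_eq_one.1 hcard
  have hi₀ : i₀ ∈ s.filter (fun i => lam < θ i) := hF ▸ mem_singleton_self i₀
  have hlt₀ : lam < θ i₀ := (mem_filter.1 hi₀).2
  have hlam_le : lam ≤ √(θ i₀ * lam) := Real.le_sqrt_of_sq_le (by nlinarith)
  have hq : ∀ i ∈ s, spDemand √(θ i₀ * lam) (θ i) = cpDemand lam (θ i) := by
    intro i hi
    by_cases hii₀ : i = i₀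
    · rw [hii₀, spDemand_sqrt_mul_eq_cpDemand hlam hlt₀]
    have hθi : θ i ≤ lam :=
      not_lt.1 fun hlt => hii₀ (mem_singleton.1 (hF ▸ mem_filter.2 ⟨hi, hlt⟩))
    rw [spDemand_eq_zero_of_le (hlam.trans_le hlam_le) (hθi.trans hlam_le),
      cpDemand_eq_zero_of_le hlam hθi]
  have hp_eq : p = √(θ i₀ * lam) :=
    eq_of_sum_spDemand_eq hN hp (hlam.trans_le hlam_le) (hbudget ▸ hpos)
      (by rw [hbudget]; exact sum_congr rfl fun i hi => by rw [hq i hi])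
  rwa [hp_eq]

end Market

theorem cp_revenue_ge_sp_revenue_general (I : ℕ) (θ N : ℕ → ℝ)
    (hθanti : ∀ i j, i < j → j < I → θ j < θ i)
    (hN : ∀ i < I, 0 < N i)
    (S : ℝ) (hS : 0 < S)
    (lam : ℝ) (hlam : 0 < lam)
    (hwfcp : ∑ i ∈ Finset.range I, N i * max (Real.sqrt (θ i / lam) - 1) 0 = S)
    (pstar : ℝ) (hpstar : 0 < pstar)
    (hwfsp : ∑ i ∈ Finset.range I, N i * max (θ i / pstar - 1) 0 = S) :
    (pstar * S ≤
      ∑ i ∈ (Finset.range I).filter (fun i => lam < θ i),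
        N i * (θ i - Real.sqrt (θ i * lam))) ∧
    ((∑ i ∈ (Finset.range I).filter (fun i => lam < θ i),
        N i * (θ i - Real.sqrt (θ i * lam)) = pstar * S) ↔
      ((Finset.range I).filter (fun i => lam < θ i)).card = 1) := by
  have hN' : ∀ i ∈ range I, 0 < N i := fun i hi => hN i (mem_range.1 hi)
  have hinj : Set.InjOn θ (range I) :=
    StrictAntiOn.injOn fun i _ j hj hij => hθanti i j hij (mem_range.1 hj)
  have hcp : ∑ i ∈ range I, N i * cpDemand lam (θ i) = S := hwfcp
  have hsp : ∑ i ∈ range I, N i * spDemand pstar (θ i) = S := hwfsp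
  have hbudget := hsp.trans hcp.symm
  have hsp_nonneg : ∀ i ∈ range I, 0 ≤ spDemand pstar (θ i) := fun _ _ => le_max_right _ _
  have hcp_rev : ∑ i ∈ (range I).filter (fun i => lam < θ i), N i * (θ i - √(θ i * lam)) =
      ∑ i ∈ range I, N i * allocRevenue (θ i) (cpDemand lam (θ i)) := by
    rw [sum_filter]
    exact sum_congr rfl fun i _ => by rw [allocRevenue_cpDemand hlam]; split_ifs <;> simp
  have hsp_rev :
      pstar * S = ∑ i ∈ range I, N i * allocRevenue (θ i) (spDemand pstar (θ i)) := by
    rw [← hsp, mul_sum]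
    exact sum_congr rfl fun i _ => by rw [allocRevenue_spDemand hpstar, mul_left_comm]
  rw [hcp_rev, hsp_rev, eq_comm, sum_allocRevenue_eq_cpDemand_iff hlam hN' hsp_nonneg hbudget]
  exact ⟨sum_allocRevenue_le_cpDemand hlam (fun i hi => (hN' i hi).le) hsp_nonneg hbudget,
    card_filter_lt_eq_one_of_spDemand_eq_cpDemand hlam hpstar hinj (hcp ▸ hS),
    spDemand_eq_cpDemand_of_card_filter_eq_one hlam hpstar (fun i hi => (hN' i hi).le)
      (hcp ▸ hS) hbudget⟩

/-- The optimal CP revenue is at least the optimal SP revenue p*·S, with equality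
iff the CP effective market has exactly one group. Groups are indexed 0, …, I−1. -/
theorem cp_revenue_ge_sp_revenue (I : ℕ) (hI : 1 ≤ I) (θ N : ℕ → ℝ)
    (hθpos : ∀ i < I, 0 < θ i)
    (hθanti : ∀ i j, i < j → j < I → θ j < θ i)
    (hN : ∀ i < I, 0 < N i)
    (S : ℝ) (hS : 0 < S)
    (lam : ℝ) (hlam : 0 < lam)
    (hwfcp : ∑ i ∈ Finset.range I, N i * max (Real.sqrt (θ i / lam) - 1) 0 = S)
    (pstar : ℝ) (hpstar : 0 < pstar)
    (hwfsp : ∑ i ∈ Finset.range I, N i * max (θ i / pstar - 1) 0 = S) :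
    (pstar * S ≤
      ∑ i ∈ (Finset.range I).filter (fun i => lam < θ i),
        N i * (θ i - Real.sqrt (θ i * lam))) ∧
    ((∑ i ∈ (Finset.range I).filter (fun i => lam < θ i),
        N i * (θ i - Real.sqrt (θ i * lam)) = pstar * S) ↔
      ((Finset.range I).filter (fun i => lam < θ i)).card = 1) :=
  cp_revenue_ge_sp_revenue_general I θ N hθanti hN S hS lam hlam hwfcp pstar hpstar hwfsp
end

section
/- Let θ_1 > θ_2 > … > θ_I > 0 and S > 0. Suppose N_i > 0 and N_i' ≥ N_i for all i = 1, …, I, and let λ* and λ*' be the CP water levels for the user counts (N_i) and (N_i') respectively. Then λ*' ≥ λ*, and consequently the effective market shrinks or stays the same: #{i : θ_i > λ*'} ≤ #{i : θ_i > λ*}. -/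
/-- Monotonicity of the CP water level in the user counts: if N_i' ≥ N_i for all i,
then the water level weakly increases and the effective market weakly shrinks.
Groups are indexed 0, …, I−1. -/
theorem cp_water_level_monotone (I : ℕ) (hI : 1 ≤ I) (θ : ℕ → ℝ)
    (hθpos : ∀ i < I, 0 < θ i)
    (hθanti : ∀ i j, i < j → j < I → θ j < θ i)
    (S : ℝ) (hS : 0 < S)
    (N N' : ℕ → ℝ)
    (hN : ∀ i < I, 0 < N i)
    (hNN' : ∀ i < I, N i ≤ N' i)
    (lam lam' : ℝ) (hlam : 0 < lam) (hlam' : 0 < lam')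
    (hwf : ∑ i ∈ Finset.range I, N i * max (Real.sqrt (θ i / lam) - 1) 0 = S)
    (hwf' : ∑ i ∈ Finset.range I, N' i * max (Real.sqrt (θ i / lam') - 1) 0 = S) :
    lam ≤ lam' ∧
    ((Finset.range I).filter (fun i => lam' < θ i)).card ≤
      ((Finset.range I).filter (fun i => lam < θ i)).card := by
  have hle : lam ≤ lam' := by
    by_contra hlt
    push_neg at hlt
    -- there is some index with a strictly positive term in the primed sum
    have hex : ∃ i ∈ Finset.range I,
        0 < N' i * max (Real.sqrt (θ i / lam') - 1) 0 := by
      by_contra hall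
      push_neg at hall
      have : (∑ i ∈ Finset.range I, N' i * max (Real.sqrt (θ i / lam') - 1) 0) ≤ 0 :=
        Finset.sum_nonpos hall
      linarith [hwf'.symm ▸ this]
    obtain ⟨i₀, hi₀mem, hi₀pos⟩ := hex
    have hi₀ : i₀ < I := Finset.mem_range.mp hi₀mem
    -- pointwise ≤ for all i
    have hpt : ∀ i ∈ Finset.range I,
        N i * max (Real.sqrt (θ i / lam) - 1) 0 ≤
        N' i * max (Real.sqrt (θ i / lam') - 1) 0 := by
      intro i hi
      have hiI := Finset.mem_range.mp hi
      have hθi := hθpos i hiI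
      have hdiv : θ i / lam ≤ θ i / lam' :=
        div_le_div_of_nonneg_left (le_of_lt hθi) hlam' (le_of_lt hlt)
      have hsq : Real.sqrt (θ i / lam) ≤ Real.sqrt (θ i / lam') :=
        Real.sqrt_le_sqrt hdiv
      have hmax : max (Real.sqrt (θ i / lam) - 1) 0 ≤
          max (Real.sqrt (θ i / lam') - 1) 0 :=
        max_le_max (by linarith) le_rfl
      have h0 : 0 ≤ max (Real.sqrt (θ i / lam) - 1) 0 := le_max_right _ _
      calc N i * max (Real.sqrt (θ i / lam) - 1) 0
          ≤ N' i * max (Real.sqrt (θ i / lam) - 1) 0 :=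
            mul_le_mul_of_nonneg_right (hNN' i hiI) h0
        _ ≤ N' i * max (Real.sqrt (θ i / lam') - 1) 0 :=
            mul_le_mul_of_nonneg_left hmax
              (le_trans (le_of_lt (hN i hiI)) (hNN' i hiI))
    -- strict inequality at i₀
    have hstrict : N i₀ * max (Real.sqrt (θ i₀ / lam) - 1) 0 <
        N' i₀ * max (Real.sqrt (θ i₀ / lam') - 1) 0 := by
      have hθi := hθpos i₀ hi₀
      have hN'pos : 0 < N' i₀ := lt_of_lt_of_le (hN i₀ hi₀) (hNN' i₀ hi₀)
      have hmaxpos : 0 < max (Real.sqrt (θ i₀ / lam') - 1) 0 := by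
        by_contra h
        push_neg at h
        have : N' i₀ * max (Real.sqrt (θ i₀ / lam') - 1) 0 ≤ 0 :=
          mul_nonpos_of_nonneg_of_nonpos (le_of_lt hN'pos) h
        linarith
      have hone : 1 < Real.sqrt (θ i₀ / lam') := by
        rcases max_cases (Real.sqrt (θ i₀ / lam') - 1) 0 with ⟨heq, _⟩ | ⟨heq, _⟩
        · linarith [heq ▸ hmaxpos]
        · linarith [heq ▸ hmaxpos]
      have hdiv : θ i₀ / lam < θ i₀ / lam' :=
        div_lt_div_of_pos_left hθi hlam' hlt
      have hsq : Real.sqrt (θ i₀ / lam) < Real.sqrt (θ i₀ / lam') := by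
        apply Real.sqrt_lt_sqrt (le_of_lt (div_pos hθi hlam)) hdiv
      have hmaxlt : max (Real.sqrt (θ i₀ / lam) - 1) 0 <
          max (Real.sqrt (θ i₀ / lam') - 1) 0 := by
        rcases le_or_gt (Real.sqrt (θ i₀ / lam)) 1 with h | h
        · calc max (Real.sqrt (θ i₀ / lam) - 1) 0 = 0 := max_eq_right (by linarith)
            _ < _ := hmaxpos
        · calc max (Real.sqrt (θ i₀ / lam) - 1) 0 = Real.sqrt (θ i₀ / lam) - 1 :=
                max_eq_left (by linarith)
            _ < Real.sqrt (θ i₀ / lam') - 1 := by linarith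
            _ ≤ _ := le_max_left _ _
      calc N i₀ * max (Real.sqrt (θ i₀ / lam) - 1) 0
          < N i₀ * max (Real.sqrt (θ i₀ / lam') - 1) 0 :=
            mul_lt_mul_of_pos_left hmaxlt (hN i₀ hi₀)
        _ ≤ N' i₀ * max (Real.sqrt (θ i₀ / lam') - 1) 0 :=
            mul_le_mul_of_nonneg_right (hNN' i₀ hi₀) (le_of_lt hmaxpos)
    have := Finset.sum_lt_sum hpt ⟨i₀, hi₀mem, hstrict⟩
    rw [hwf, hwf'] at this
    exact lt_irrefl S this
  refine ⟨hle, Finset.card_le_card ?_⟩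
  intro i hi
  simp only [Finset.mem_filter] at hi ⊢
  exact ⟨hi.1, lt_of_le_of_lt hle hi.2⟩
end

section
/- Let θ_1 > θ_2 > … > θ_I > 0, N_1, …, N_I > 0, S > 0, let p* be the optimal single price and K = #{i : θ_i > p*}. Add a new group v with N_v > 0 users and willingness to pay θ_v > θ_K. Then the unique p' > 0 satisfying ∑_{i=1}^I N_i·(θ_i/p' − 1)^+ + N_v·(θ_v/p' − 1)^+ = S satisfies p' > p*; hence the optimal single-pricing revenue strictly increases: p'·S > p*·S. -/
/-- Adding a new group v with willingness to pay θ_v greater than that of the last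
effective group (group K, where K = #{i : θ_i > p*}) strictly increases the
optimal single price and hence the optimal single-pricing revenue.
Groups are indexed 0, …, I−1, so group K of the paper has index K−1. -/
theorem sp_revenue_increases_with_new_group (I : ℕ) (hI : 1 ≤ I) (θ N : ℕ → ℝ)
    (hθpos : ∀ i < I, 0 < θ i)
    (hθanti : ∀ i j, i < j → j < I → θ j < θ i)
    (hN : ∀ i < I, 0 < N i)
    (S : ℝ) (hS : 0 < S)
    (pstar : ℝ) (hpstar : 0 < pstar)
    (hwf : ∑ i ∈ Finset.range I, N i * max (θ i / pstar - 1) 0 = S)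
    (θv Nv : ℝ) (hNv : 0 < Nv)
    (hθv : θ (((Finset.range I).filter (fun i => pstar < θ i)).card - 1) < θv)
    (p' : ℝ) (hp' : 0 < p')
    (hwf' : (∑ i ∈ Finset.range I, N i * max (θ i / p' - 1) 0) +
        Nv * max (θv / p' - 1) 0 = S) :
    pstar < p' ∧ pstar * S < p' * S := by
  have hK : pstar < θ (((Finset.range I).filter (fun i => pstar < θ i)).card - 1) := by
    set F := (Finset.range I).filter (fun i => pstar < θ i) with hF
    have hFne : F.Nonempty := by
      by_contra h
      rw [Finset.not_nonempty_iff_eq_empty] at h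
      have hz : ∑ i ∈ Finset.range I, N i * max (θ i / pstar - 1) 0 = 0 := by
        apply Finset.sum_eq_zero
        intro i hi
        have hiI := Finset.mem_range.mp hi
        have hθi : ¬ pstar < θ i := by
          intro hc
          have : i ∈ F := by rw [hF]; exact Finset.mem_filter.mpr ⟨hi, hc⟩
          simp [h] at this
        have hle : θ i / pstar - 1 ≤ 0 := by
          rw [sub_nonpos, div_le_one hpstar]
          exact not_lt.mp hθi
        simp [max_eq_right hle]
      rw [hz] at hwf; linarith
    set m := F.max' hFne with hm
    have hmF : m ∈ F := F.max'_mem hFne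
    have hmI : m < I := Finset.mem_range.mp (Finset.mem_filter.mp hmF).1
    have hFeq : F = Finset.range (m + 1) := by
      ext i
      rw [Finset.mem_range]
      constructor
      · intro hi; exact Nat.lt_succ_of_le (F.le_max' i hi)
      · intro hi
        rcases Nat.lt_succ_iff_lt_or_eq.mp hi with h | h
        · have h1 : θ m < θ i := hθanti i m h hmI
          have h2 : pstar < θ i := lt_trans (Finset.mem_filter.mp hmF).2 h1
          exact Finset.mem_filter.mpr ⟨Finset.mem_range.mpr (lt_trans h hmI), h2⟩
        · subst h; exact hmF
    have hcard : F.card = m + 1 := by rw [hFeq, Finset.card_range]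
    rw [hcard]
    simpa using (Finset.mem_filter.mp hmF).2
  have hθvp : pstar < θv := lt_trans hK hθv
  have key : pstar < p' := by
    by_contra h
    push_neg at h
    have hsum_le : ∑ i ∈ Finset.range I, N i * max (θ i / pstar - 1) 0
        ≤ ∑ i ∈ Finset.range I, N i * max (θ i / p' - 1) 0 := by
      apply Finset.sum_le_sum
      intro i hi
      have hiI := Finset.mem_range.mp hi
      have hdiv : θ i / pstar ≤ θ i / p' :=
        div_le_div_of_nonneg_left (hθpos i hiI).le hp' h
      have h2 : max (θ i / pstar - 1) 0 ≤ max (θ i / p' - 1) 0 :=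
        max_le_max (by linarith) le_rfl
      exact mul_le_mul_of_nonneg_left h2 (hN i hiI).le
    have hterm : 0 < Nv * max (θv / p' - 1) 0 := by
      have h1 : 1 < θv / p' := by
        rw [lt_div_iff₀ hp']; nlinarith
      have h2 : 0 < max (θv / p' - 1) 0 := lt_max_of_lt_left (by linarith)
      exact mul_pos hNv h2
    linarith
  exact ⟨key, by nlinarith⟩
end

section
/- Let θ_1 > θ_2 > … > θ_K > 0, N_1, …, N_K > 0, and let 1 ≤ J ≤ K. For a partition of {1, …, K} into J nonempty clusters C_1, …, C_J, define N^j = ∑_{i∈C_j} N_i, θ^j = (∑_{i∈C_j} N_i·θ_i)/N^j, and the value v = ∑_{j=1}^J N^j·√(θ^j). Then among all partitions of {1, …, K} into J nonempty clusters, the minimum of v is attained by a partition in which every cluster is a set of consecutive indices (an interval of {1, …, K}). -/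
/-- n·√(s/n) = √(n·s) for n>0, s≥0. -/
lemma ppd_val_eq {n s : ℝ} (hn : 0 < n) (hs : 0 ≤ s) :
    n * Real.sqrt (s / n) = Real.sqrt (n * s) := by
  rw [Real.sqrt_div hs n, mul_comm n s, Real.sqrt_mul hs n]
  have h : Real.sqrt n ≠ 0 := by positivity
  field_simp
  ring_nf
  rw [Real.sq_sqrt hn.le]
  ring

/-- upper bound: adding a point to a cluster. t = √(avg of B). -/
lemma ppd_UB {nb sb n s t : ℝ} (hnb : 0 < nb) (hn : 0 ≤ n) (hs : 0 ≤ s)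
    (ht : 0 < t) (htt : nb * t ^ 2 = sb) :
    Real.sqrt ((nb + n) * (sb + s)) ≤ nb * t + (n * t + s / t) / 2 := by
  have hrhs : 0 ≤ nb * t + (n * t + s / t) / 2 := by positivity
  have h2 : (nb + n) * (sb + s) ≤ (nb * t + (n * t + s / t) / 2) ^ 2 := by
    have key : 0 ≤ (n * t - s / t) ^ 2 := sq_nonneg _
    have hst : s / t * t = s := div_mul_cancel₀ s ht.ne'
    nlinarith [sq_nonneg (n * t - s / t), mul_pos hnb ht]
  calc Real.sqrt ((nb + n) * (sb + s)) ≤ Real.sqrt ((nb * t + (n * t + s / t) / 2) ^ 2) :=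
        Real.sqrt_le_sqrt h2
    _ = nb * t + (n * t + s / t) / 2 := Real.sqrt_sq hrhs

/-- lower bound (≤ form): removing a point from a cluster. -/
lemma ppd_LB {na sa n s t : ℝ} (hna : 0 < na) (hn : 0 < n) (hs : 0 < s)
    (hnn : n < na) (hss : s < sa)
    (ht : 0 < t) (htt : na * t ^ 2 = sa) :
    Real.sqrt ((na - n) * (sa - s)) ≤ na * t - (n * t + s / t) / 2 := by
  have hst : s / t * t = s := div_mul_cancel₀ s ht.ne'
  have hrhs : 0 ≤ na * t - (n * t + s / t) / 2 := by
    rw [sub_nonneg, div_le_iff₀ (by norm_num : (0:ℝ) < 2)]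
    have : s / t * t = s := hst
    nlinarith [mul_pos hna ht]
  have h2 : (na - n) * (sa - s) ≤ (na * t - (n * t + s / t) / 2) ^ 2 := by
    nlinarith [sq_nonneg (n * t - s / t)]
  calc Real.sqrt ((na - n) * (sa - s)) ≤ Real.sqrt ((na * t - (n * t + s / t) / 2) ^ 2) :=
        Real.sqrt_le_sqrt h2
    _ = na * t - (n * t + s / t) / 2 := Real.sqrt_sq hrhs

/-- strict lower bound when the point's θ differs from the cluster average. -/
lemma ppd_LB_lt {na sa n s t : ℝ} (hna : 0 < na) (hn : 0 < n) (hs : 0 < s)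
    (hnn : n < na) (hss : s < sa)
    (ht : 0 < t) (htt : na * t ^ 2 = sa) (hne : n * t ^ 2 ≠ s) :
    Real.sqrt ((na - n) * (sa - s)) < na * t - (n * t + s / t) / 2 := by
  have hst : s / t * t = s := div_mul_cancel₀ s ht.ne'
  have hne' : n * t - s / t ≠ 0 := by
    intro h
    apply hne
    have := sub_eq_zero.mp h
    nlinarith
  have hrhs : 0 < na * t - (n * t + s / t) / 2 := by
    have h0 : Real.sqrt ((na - n) * (sa - s)) ≤ na * t - (n * t + s / t) / 2 :=
      ppd_LB hna hn hs hnn hss ht htt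
    have h1 : (0:ℝ) ≤ Real.sqrt ((na - n) * (sa - s)) := Real.sqrt_nonneg _
    have hq : 0 < (na - n) * (sa - s) := mul_pos (by linarith) (by linarith)
    have := Real.sqrt_pos.mpr hq
    linarith
  have h2 : (na - n) * (sa - s) < (na * t - (n * t + s / t) / 2) ^ 2 := by
    have key : 0 < (n * t - s / t) ^ 2 := by positivity
    nlinarith
  exact (Real.sqrt_lt' hrhs).mpr h2

/-- comparison of the marginal costs q(t) at two cluster averages. -/
lemma ppd_qcomp {na θa t t' : ℝ} (hna : 0 < na) (hθ : 0 < θa) (ht : 0 < t) (ht' : 0 < t')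
    (h : (na * t + na * θa / t) / 2 ≤ (na * t' + na * θa / t') / 2) (hlt : t' < t) :
    t * t' ≤ θa := by
  have h1 : na * t + na * θa / t ≤ na * t' + na * θa / t' := by linarith
  have h2 : (na * t + na * θa / t) * (t * t') ≤ (na * t' + na * θa / t') * (t * t') := by
    apply mul_le_mul_of_nonneg_right h1 (by positivity)
  have h3 : na * t * (t * t') + na * θa * t' ≤ na * t' * (t * t') + na * θa * t := by
    calc na * t * (t * t') + na * θa * t' = (na * t + na * θa / t) * (t * t') := by
          field_simp
      _ ≤ (na * t' + na * θa / t') * (t * t') := h2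
      _ = na * t' * (t * t') + na * θa * t := by field_simp
  nlinarith [h3, mul_pos hna (sub_pos.mpr hlt)]


def ppdValid (K J : ℕ) (C : Fin J → Finset ℕ) : Prop :=
  (∀ j, (C j).Nonempty) ∧
    (∀ j j', j ≠ j' → Disjoint (C j) (C j')) ∧
    Finset.univ.biUnion C = Finset.range K

noncomputable def ppdVal (θ N : ℕ → ℝ) (C : Finset ℕ) : ℝ :=
  (∑ i ∈ C, N i) * Real.sqrt ((∑ i ∈ C, N i * θ i) / (∑ i ∈ C, N i))

lemma ppd_exists_min (K J : ℕ) (hJ : 1 ≤ J) (hJK : J ≤ K) (θ N : ℕ → ℝ) :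
    ∃ D, ppdValid K J D ∧
      ∀ C, ppdValid K J C → ∑ j, ppdVal θ N (D j) ≤ ∑ j, ppdVal θ N (C j) := by
  have hfin : {C : Fin J → Finset ℕ | ppdValid K J C}.Finite := by
    apply Set.Finite.subset
      (Set.Finite.pi (fun _ : Fin J => (Finset.range K).powerset.finite_toSet))
    intro C hC
    intro j _
    simp only [Finset.coe_powerset, Set.mem_preimage, Set.mem_powerset_iff,
      Finset.coe_subset, Finset.mem_coe, Finset.mem_powerset]
    rw [← hC.2.2]
    exact Finset.subset_biUnion_of_mem C (Finset.mem_univ j)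
  have hne : {C : Fin J → Finset ℕ | ppdValid K J C}.Nonempty := by
    refine ⟨fun j => if (j : ℕ) < J - 1 then {(j : ℕ)} else Finset.Ico (J - 1) K, ?_, ?_, ?_⟩
    · intro j
      by_cases h : (j : ℕ) < J - 1 <;> simp [h]
      omega
    · intro j j' hjj'
      have hv : (j : ℕ) ≠ (j' : ℕ) := fun h => hjj' (Fin.ext h)
      by_cases h : (j : ℕ) < J - 1 <;> by_cases h' : (j' : ℕ) < J - 1 <;>
        simp [h, h', Finset.disjoint_left] <;> omega
    · ext x
      simp only [Finset.mem_biUnion, Finset.mem_univ, true_and, Finset.mem_range]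
      constructor
      · rintro ⟨j, hj⟩
        by_cases h : (j : ℕ) < J - 1
        · simp only [h, if_true, Finset.mem_singleton] at hj
          omega
        · simp only [h, if_false, Finset.mem_Ico] at hj
          omega
      · intro hx
        by_cases h : x < J - 1
        · refine ⟨⟨x, by omega⟩, ?_⟩
          simp [h]
        · refine ⟨⟨J - 1, by omega⟩, ?_⟩
          have : ¬ ((⟨J - 1, by omega⟩ : Fin J) : ℕ) < J - 1 := by simp
          simp only [this, if_false, Finset.mem_Ico]
          omega
  obtain ⟨D, hD, hmin⟩ := Set.exists_min_image _ (fun C => ∑ j, ppdVal θ N (C j)) hfin hne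
  exact ⟨D, hD, fun C hC => hmin C hC⟩

/-- Moving an element `a` from cluster `j` to cluster `j'` preserves validity and
changes the value in the expected way. -/
lemma ppd_move (K J : ℕ) (θ N : ℕ → ℝ) (D : Fin J → Finset ℕ) (hD : ppdValid K J D)
    (j j' : Fin J) (hjj' : j ≠ j') (a : ℕ) (ha : a ∈ D j) (hne : (D j \ {a}).Nonempty) :
    ppdValid K J (Function.update (Function.update D j (D j \ {a})) j' (D j' ∪ {a})) ∧
    ∑ k, ppdVal θ N ((Function.update (Function.update D j (D j \ {a})) j' (D j' ∪ {a})) k) =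
      ∑ k, ppdVal θ N (D k)
        + (ppdVal θ N (D j' ∪ {a}) - ppdVal θ N (D j'))
        + (ppdVal θ N (D j \ {a}) - ppdVal θ N (D j)) := by
  obtain ⟨hne0, hdisj, huni⟩ := hD
  set D' := Function.update (Function.update D j (D j \ {a})) j' (D j' ∪ {a}) with hD'
  have hD'j : D' j = D j \ {a} := by
    rw [hD', Function.update_of_ne hjj', Function.update_self]
  have hD'j' : D' j' = D j' ∪ {a} := by
    rw [hD', Function.update_self]
  have hD'k : ∀ k, k ≠ j → k ≠ j' → D' k = D k := by
    intro k hk hk'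
    rw [hD', Function.update_of_ne hk', Function.update_of_ne hk]
  have hanotj' : a ∉ D j' := Finset.disjoint_left.mp (hdisj j j' hjj') ha
  constructor
  · refine ⟨?_, ?_, ?_⟩
    · intro k
      by_cases hk : k = j'
      · subst hk; rw [hD'j']; exact Finset.Nonempty.inr (Finset.singleton_nonempty a)
      · by_cases hk2 : k = j
        · subst hk2; rw [hD'j]; exact hne
        · rw [hD'k k hk2 hk]; exact hne0 k
    · -- disjointness
      have base : ∀ k k', k ≠ k' → Disjoint (D' k) (D' k') := by
        intro k k' hkk'
        rcases eq_or_ne k j with rfl | hkj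
        · rw [hD'j]
          rcases eq_or_ne k' j' with rfl | hk'j'
          · rw [hD'j']
            rw [Finset.disjoint_union_right]
            constructor
            · exact Finset.disjoint_of_subset_left (Finset.sdiff_subset) (hdisj _ _ hkk')
            · simp [Finset.disjoint_singleton_right]
          · rw [hD'k k' (Ne.symm hkk') hk'j']
            exact Finset.disjoint_of_subset_left (Finset.sdiff_subset) (hdisj _ _ hkk')
        · rcases eq_or_ne k j' with rfl | hkj'
          · rw [hD'j', Finset.disjoint_union_left]
            rcases eq_or_ne k' j with rfl | hk'j
            · rw [hD'j]
              constructor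
              · exact Finset.disjoint_of_subset_right (Finset.sdiff_subset) (hdisj _ _ hkk')
              · simp [Finset.disjoint_singleton_left]
            · rw [hD'k k' hk'j (Ne.symm hkk')]
              constructor
              · exact hdisj _ _ hkk'
              · rw [Finset.disjoint_singleton_left]
                exact Finset.disjoint_left.mp (hdisj j k' (Ne.symm hk'j)) ha
          · rw [hD'k k hkj hkj']
            rcases eq_or_ne k' j with rfl | hk'j
            · rw [hD'j]
              exact Finset.disjoint_of_subset_right (Finset.sdiff_subset) (hdisj _ _ hkk')
            · rcases eq_or_ne k' j' with rfl | hk'j'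
              · rw [hD'j', Finset.disjoint_union_right]
                constructor
                · exact hdisj _ _ hkk'
                · rw [Finset.disjoint_singleton_right]
                  exact Finset.disjoint_left.mp (hdisj j k (Ne.symm hkj)) ha
              · rw [hD'k k' hk'j hk'j']
                exact hdisj _ _ hkk'
      exact base
    · -- union
      rw [← huni]
      ext x
      simp only [Finset.mem_biUnion, Finset.mem_univ, true_and]
      constructor
      · rintro ⟨k, hk⟩
        rcases eq_or_ne k j with rfl | hkj
        · rw [hD'j] at hk
          exact ⟨k, (Finset.mem_sdiff.mp hk).1⟩
        · rcases eq_or_ne k j' with rfl | hkj'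
          · rw [hD'j'] at hk
            rcases Finset.mem_union.mp hk with h | h
            · exact ⟨k, h⟩
            · exact ⟨j, by rwa [Finset.mem_singleton.mp h]⟩
          · rw [hD'k k hkj hkj'] at hk
            exact ⟨k, hk⟩
      · rintro ⟨k, hk⟩
        rcases eq_or_ne k j with rfl | hkj
        · rcases eq_or_ne x a with rfl | hxa
          · exact ⟨j', by rw [hD'j']; exact Finset.mem_union_right _ (Finset.mem_singleton_self x)⟩
          · exact ⟨k, by rw [hD'j]; exact Finset.mem_sdiff.mpr ⟨hk, by simpa using hxa⟩⟩
        · rcases eq_or_ne k j' with rfl | hkj'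
          · exact ⟨k, by rw [hD'j']; exact Finset.mem_union_left _ hk⟩
          · exact ⟨k, by rw [hD'k k hkj hkj']; exact hk⟩
  · -- value identity
    have hj'univ : j' ∈ Finset.univ.erase j := Finset.mem_erase.mpr ⟨Ne.symm hjj', Finset.mem_univ j'⟩
    have decomp : ∀ E : Fin J → Finset ℕ,
        ∑ k, ppdVal θ N (E k) =
          ∑ k ∈ (Finset.univ.erase j).erase j', ppdVal θ N (E k)
            + ppdVal θ N (E j') + ppdVal θ N (E j) := by
      intro E
      rw [← Finset.sum_erase_add Finset.univ _ (Finset.mem_univ j),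
        ← Finset.sum_erase_add (Finset.univ.erase j) _ hj'univ]
    rw [decomp D', decomp D]
    have hsame : ∑ k ∈ (Finset.univ.erase j).erase j', ppdVal θ N (D' k) =
        ∑ k ∈ (Finset.univ.erase j).erase j', ppdVal θ N (D k) := by
      apply Finset.sum_congr rfl
      intro k hk
      have hk' := Finset.mem_erase.mp hk
      have hk2 := Finset.mem_erase.mp hk'.2
      rw [hD'k k hk2.1 hk'.1]
    rw [hsame, hD'j, hD'j']
    ring

lemma ppd_sums_pos (K : ℕ) (θ N : ℕ → ℝ) (hθpos : ∀ i < K, 0 < θ i)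
    (hN : ∀ i < K, 0 < N i) {C : Finset ℕ} (hCne : C.Nonempty)
    (hsub : C ⊆ Finset.range K) :
    0 < ∑ i ∈ C, N i ∧ 0 < ∑ i ∈ C, N i * θ i := by
  constructor
  · exact Finset.sum_pos (fun i hi => hN i (Finset.mem_range.mp (hsub hi))) hCne
  · exact Finset.sum_pos (fun i hi => mul_pos (hN i (Finset.mem_range.mp (hsub hi)))
      (hθpos i (Finset.mem_range.mp (hsub hi)))) hCne

lemma ppd_cluster_sub {K J : ℕ} {D : Fin J → Finset ℕ} (hD : ppdValid K J D) (j : Fin J) :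
    D j ⊆ Finset.range K := by
  rw [← hD.2.2]
  exact Finset.subset_biUnion_of_mem D (Finset.mem_univ j)

lemma ppd_qcomp' {na θa t t' : ℝ} (hna : 0 < na) (ht : 0 < t) (ht' : 0 < t')
    (h : (na * t' + na * θa / t') / 2 ≤ (na * t + na * θa / t) / 2) (hlt : t' < t) :
    θa ≤ t * t' := by
  have h1 : na * t' + na * θa / t' ≤ na * t + na * θa / t := by linarith
  have h3 : na * t' * (t * t') + na * θa * t ≤ na * t * (t * t') + na * θa * t' := by
    calc na * t' * (t * t') + na * θa * t = (na * t' + na * θa / t') * (t * t') := by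
          field_simp
      _ ≤ (na * t + na * θa / t) * (t * t') := by
          exact mul_le_mul_of_nonneg_right h1 (by positivity)
      _ = na * t * (t * t') + na * θa * t' := by field_simp
  nlinarith [h3, mul_pos hna (sub_pos.mpr hlt)]

/-- Central consequence of minimality: moving `a` from cluster `j` (which keeps ≥1 element)
to cluster `j'` must not decrease the value; this bounds the marginal costs. -/
lemma ppd_q (K J : ℕ) (θ N : ℕ → ℝ) (hθpos : ∀ i < K, 0 < θ i) (hN : ∀ i < K, 0 < N i)
    (D : Fin J → Finset ℕ) (hD : ppdValid K J D)
    (hmin : ∀ C, ppdValid K J C → ∑ k, ppdVal θ N (D k) ≤ ∑ k, ppdVal θ N (C k))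
    (j j' : Fin J) (hjj' : j ≠ j') (a : ℕ) (ha : a ∈ D j) (hne : (D j \ {a}).Nonempty) :
    ((N a * Real.sqrt ((∑ i ∈ D j, N i * θ i) / ∑ i ∈ D j, N i)
        + N a * θ a / Real.sqrt ((∑ i ∈ D j, N i * θ i) / ∑ i ∈ D j, N i)) / 2
      ≤ (N a * Real.sqrt ((∑ i ∈ D j', N i * θ i) / ∑ i ∈ D j', N i)
        + N a * θ a / Real.sqrt ((∑ i ∈ D j', N i * θ i) / ∑ i ∈ D j', N i)) / 2)
    ∧ (θ a ≠ (∑ i ∈ D j, N i * θ i) / ∑ i ∈ D j, N i →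
      (N a * Real.sqrt ((∑ i ∈ D j, N i * θ i) / ∑ i ∈ D j, N i)
        + N a * θ a / Real.sqrt ((∑ i ∈ D j, N i * θ i) / ∑ i ∈ D j, N i)) / 2
      < (N a * Real.sqrt ((∑ i ∈ D j', N i * θ i) / ∑ i ∈ D j', N i)
        + N a * θ a / Real.sqrt ((∑ i ∈ D j', N i * θ i) / ∑ i ∈ D j', N i)) / 2) := by
  -- basic positivity
  have hsubj := ppd_cluster_sub hD j
  have hsubj' := ppd_cluster_sub hD j'
  have haK : a < K := Finset.mem_range.mp (hsubj ha)
  have hNa : 0 < N a := hN a haK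
  have hθa : 0 < θ a := hθpos a haK
  obtain ⟨hnj, hsj⟩ := ppd_sums_pos K θ N hθpos hN (hD.1 j) hsubj
  obtain ⟨hnj', hsj'⟩ := ppd_sums_pos K θ N hθpos hN (hD.1 j') hsubj'
  obtain ⟨hnr, hsr⟩ := ppd_sums_pos K θ N hθpos hN hne
    (Finset.Subset.trans (Finset.sdiff_subset) hsubj)
  set nj := ∑ i ∈ D j, N i with hnj_def
  set sj := ∑ i ∈ D j, N i * θ i with hsj_def
  set nj' := ∑ i ∈ D j', N i with hnj'_def
  set sj' := ∑ i ∈ D j', N i * θ i with hsj'_def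
  set tj := Real.sqrt (sj / nj) with htj_def
  set tj' := Real.sqrt (sj' / nj') with htj'_def
  have htj : 0 < tj := Real.sqrt_pos.mpr (div_pos hsj hnj)
  have htj' : 0 < tj' := Real.sqrt_pos.mpr (div_pos hsj' hnj')
  have htj2 : nj * tj ^ 2 = sj := by
    rw [htj_def, Real.sq_sqrt (div_pos hsj hnj).le]
    field_simp
  have htj'2 : nj' * tj' ^ 2 = sj' := by
    rw [htj'_def, Real.sq_sqrt (div_pos hsj' hnj').le]
    field_simp
  -- sums of modified clusters
  have hsub_sing : {a} ⊆ D j := Finset.singleton_subset_iff.mpr ha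
  have hrn : ∑ i ∈ D j \ {a}, N i = nj - N a := by
    rw [Finset.sum_sdiff_eq_sub hsub_sing, Finset.sum_singleton]
  have hrs : ∑ i ∈ D j \ {a}, N i * θ i = sj - N a * θ a := by
    rw [Finset.sum_sdiff_eq_sub hsub_sing, Finset.sum_singleton]
  have hanotj' : a ∉ D j' := Finset.disjoint_left.mp (hD.2.1 j j' hjj') ha
  have huins : D j' ∪ {a} = insert a (D j') := by
    rw [Finset.union_comm, ← Finset.insert_eq]
  have hun : ∑ i ∈ D j' ∪ {a}, N i = nj' + N a := by
    rw [huins, Finset.sum_insert hanotj', hnj'_def]; ring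
  have hus : ∑ i ∈ D j' ∪ {a}, N i * θ i = sj' + N a * θ a := by
    rw [huins, Finset.sum_insert hanotj', hsj'_def]; ring
  have hNalt : N a < nj := by rw [hrn] at hnr; linarith
  have hNaθlt : N a * θ a < sj := by rw [hrs] at hsr; linarith
  -- values of the four clusters
  have hvj : ppdVal θ N (D j) = nj * tj := rfl
  have hvj' : ppdVal θ N (D j') = nj' * tj' := rfl
  have hvrem : ppdVal θ N (D j \ {a}) = Real.sqrt ((nj - N a) * (sj - N a * θ a)) := by
    rw [ppdVal, hrn, hrs, ppd_val_eq (by linarith) (by linarith)]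
  have hvuni : ppdVal θ N (D j' ∪ {a}) = Real.sqrt ((nj' + N a) * (sj' + N a * θ a)) := by
    rw [ppdVal, hun, hus, ppd_val_eq (by linarith) (by positivity)]
  -- minimality
  obtain ⟨hvalid', hval'⟩ := ppd_move K J θ N D hD j j' hjj' a ha hne
  have hmm := hmin _ hvalid'
  rw [hval'] at hmm
  have hkey : nj * tj - Real.sqrt ((nj - N a) * (sj - N a * θ a))
      ≤ Real.sqrt ((nj' + N a) * (sj' + N a * θ a)) - nj' * tj' := by
    rw [← hvj, ← hvj', ← hvrem, ← hvuni]; linarith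
  have hub : Real.sqrt ((nj' + N a) * (sj' + N a * θ a))
      ≤ nj' * tj' + (N a * tj' + N a * θ a / tj') / 2 :=
    ppd_UB hnj' hNa.le (by positivity) htj' htj'2
  constructor
  · have hlb : Real.sqrt ((nj - N a) * (sj - N a * θ a))
        ≤ nj * tj - (N a * tj + N a * θ a / tj) / 2 :=
      ppd_LB hnj hNa (by positivity) hNalt hNaθlt htj htj2
    linarith
  · intro hneq
    have hx : N a * tj ^ 2 ≠ N a * θ a := by
      rw [htj_def, Real.sq_sqrt (div_pos hsj hnj).le]
      intro h
      exact hneq ((mul_left_cancel₀ hNa.ne' h).symm)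
    have hlb : Real.sqrt ((nj - N a) * (sj - N a * θ a))
        < nj * tj - (N a * tj + N a * θ a / tj) / 2 :=
      ppd_LB_lt hnj hNa (by positivity) hNalt hNaθlt htj htj2 hx
    linarith

lemma ppd_theta_ne {K : ℕ} {θ : ℕ → ℝ} (hθanti : ∀ i j, i < j → j < K → θ j < θ i)
    {a b : ℕ} (haK : a < K) (hbK : b < K) (hab : a ≠ b) : θ a ≠ θ b := by
  rcases lt_or_gt_of_ne hab with h | h
  · exact (hθanti a b h hbK).ne'
  · exact (hθanti b a h haK).ne

lemma ppd_off_avg (K : ℕ) (θ N : ℕ → ℝ) (hθanti : ∀ i j, i < j → j < K → θ j < θ i)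
    {C : Finset ℕ} (hsub : C ⊆ Finset.range K) (h2 : 1 < C.card) :
    ∃ a ∈ C, (C \ {a}).Nonempty ∧ θ a ≠ (∑ i ∈ C, N i * θ i) / ∑ i ∈ C, N i := by
  obtain ⟨x, hx, y, hy, hxy⟩ := Finset.one_lt_card.mp h2
  have hθxy : θ x ≠ θ y :=
    ppd_theta_ne hθanti (Finset.mem_range.mp (hsub hx)) (Finset.mem_range.mp (hsub hy)) hxy
  by_cases hxavg : θ x = (∑ i ∈ C, N i * θ i) / ∑ i ∈ C, N i
  · refine ⟨y, hy, ⟨x, Finset.mem_sdiff.mpr ⟨hx, by simpa using hxy⟩⟩, ?_⟩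
    rw [← hxavg]
    exact fun h => hθxy h.symm
  · exact ⟨x, hx, ⟨y, Finset.mem_sdiff.mpr ⟨hy, by simpa using fun h => hxy h.symm⟩⟩, hxavg⟩

lemma ppd_singleton_avg {N θ : ℕ → ℝ} {a : ℕ} (hNa : N a ≠ 0) {C : Finset ℕ}
    (hC : C = {a}) : (∑ i ∈ C, N i * θ i) / ∑ i ∈ C, N i = θ a := by
  rw [hC, Finset.sum_singleton, Finset.sum_singleton]
  exact mul_div_cancel_left₀ (θ a) hNa

lemma ppd_singleton_of_not_ne {C : Finset ℕ} {a : ℕ} (ha : a ∈ C)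
    (h : ¬ (C \ {a}).Nonempty) : C = {a} := by
  have := Finset.sdiff_eq_empty_iff_subset.mp (Finset.not_nonempty_iff_eq_empty.mp h)
  exact Finset.Subset.antisymm this (Finset.singleton_subset_iff.mpr ha)

/-- At a minimizer, no two clusters have equal square-rooted averages. -/
lemma ppd_t_ne (K J : ℕ) (θ N : ℕ → ℝ) (hθpos : ∀ i < K, 0 < θ i)
    (hθanti : ∀ i j, i < j → j < K → θ j < θ i) (hN : ∀ i < K, 0 < N i)
    (D : Fin J → Finset ℕ) (hD : ppdValid K J D)
    (hmin : ∀ C, ppdValid K J C → ∑ k, ppdVal θ N (D k) ≤ ∑ k, ppdVal θ N (C k))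
    (j j' : Fin J) (hjj' : j ≠ j') :
    Real.sqrt ((∑ i ∈ D j, N i * θ i) / ∑ i ∈ D j, N i) ≠
      Real.sqrt ((∑ i ∈ D j', N i * θ i) / ∑ i ∈ D j', N i) := by
  have haux : ∀ k k' : Fin J, k ≠ k' → 1 < (D k).card →
      Real.sqrt ((∑ i ∈ D k, N i * θ i) / ∑ i ∈ D k, N i) ≠
        Real.sqrt ((∑ i ∈ D k', N i * θ i) / ∑ i ∈ D k', N i) := by
    intro k k' hkk' hcard teq
    obtain ⟨a, ha, hrem, hneq⟩ := ppd_off_avg K θ N hθanti (ppd_cluster_sub hD k) hcard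
    have hq := (ppd_q K J θ N hθpos hN D hD hmin k k' hkk' a ha hrem).2 hneq
    rw [teq] at hq
    exact lt_irrefl _ hq
  by_cases h2 : 1 < (D j).card
  · exact haux j j' hjj' h2
  · by_cases h2' : 1 < (D j').card
    · exact (haux j' j (Ne.symm hjj') h2').symm
    · -- both singletons
      have hc1 : (D j).card = 1 := by
        have := (hD.1 j).card_pos; omega
      have hc1' : (D j').card = 1 := by
        have := (hD.1 j').card_pos; omega
      obtain ⟨α, hα⟩ := Finset.card_eq_one.mp hc1
      obtain ⟨β, hβ⟩ := Finset.card_eq_one.mp hc1'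
      have hαK : α < K := Finset.mem_range.mp (ppd_cluster_sub hD j (hα ▸ Finset.mem_singleton_self α))
      have hβK : β < K := Finset.mem_range.mp (ppd_cluster_sub hD j' (hβ ▸ Finset.mem_singleton_self β))
      have hαβ : α ≠ β := by
        intro h
        subst h
        exact Finset.disjoint_left.mp (hD.2.1 j j' hjj') (hα ▸ Finset.mem_singleton_self α)
          (hβ ▸ Finset.mem_singleton_self α)
      rw [ppd_singleton_avg (hN α hαK).ne' hα, ppd_singleton_avg (hN β hβK).ne' hβ]
      intro h
      have h2 : θ α = θ β := by
        have e1 := Real.sq_sqrt (hθpos α hαK).le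
        have e2 := Real.sq_sqrt (hθpos β hβK).le
        rw [← e1, ← e2, h]
      exact ppd_theta_ne hθanti hαK hβK hαβ h2

/-- At a minimizer, the cluster with larger average lies entirely before (smaller
indices than) the cluster with smaller average. -/
lemma ppd_sep (K J : ℕ) (θ N : ℕ → ℝ) (hθpos : ∀ i < K, 0 < θ i)
    (hθanti : ∀ i j, i < j → j < K → θ j < θ i) (hN : ∀ i < K, 0 < N i)
    (D : Fin J → Finset ℕ) (hD : ppdValid K J D)
    (hmin : ∀ C, ppdValid K J C → ∑ k, ppdVal θ N (D k) ≤ ∑ k, ppdVal θ N (C k))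
    (j j' : Fin J) (hjj' : j ≠ j')
    (hlt : Real.sqrt ((∑ i ∈ D j', N i * θ i) / ∑ i ∈ D j', N i) <
      Real.sqrt ((∑ i ∈ D j, N i * θ i) / ∑ i ∈ D j, N i)) :
    ∀ a ∈ D j, ∀ b ∈ D j', a < b := by
  have hsubj := ppd_cluster_sub hD j
  have hsubj' := ppd_cluster_sub hD j'
  obtain ⟨hnj, hsj⟩ := ppd_sums_pos K θ N hθpos hN (hD.1 j) hsubj
  obtain ⟨hnj', hsj'⟩ := ppd_sums_pos K θ N hθpos hN (hD.1 j') hsubj'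
  set tj := Real.sqrt ((∑ i ∈ D j, N i * θ i) / ∑ i ∈ D j, N i) with htj_def
  set tj' := Real.sqrt ((∑ i ∈ D j', N i * θ i) / ∑ i ∈ D j', N i) with htj'_def
  have htj : 0 < tj := Real.sqrt_pos.mpr (div_pos hsj hnj)
  have htj' : 0 < tj' := Real.sqrt_pos.mpr (div_pos hsj' hnj')
  have claimA : ∀ a ∈ D j, tj * tj' ≤ θ a := by
    intro a ha
    have haK : a < K := Finset.mem_range.mp (hsubj ha)
    by_cases hcase : (D j \ {a}).Nonempty
    · have h := (ppd_q K J θ N hθpos hN D hD hmin j j' hjj' a ha hcase).1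
      exact ppd_qcomp (hN a haK) (hθpos a haK) htj htj' h hlt
    · have hsing := ppd_singleton_of_not_ne ha hcase
      have havg := ppd_singleton_avg (θ := θ) (hN a haK).ne' hsing
      have htjsq : tj * tj = θ a := by
        rw [htj_def, havg]
        exact Real.mul_self_sqrt (hθpos a haK).le
      have hlt2 : tj * tj' < θ a := by
        rw [← htjsq]
        exact mul_lt_mul_of_pos_left hlt htj
      exact hlt2.le
  have claimB : ∀ b ∈ D j', θ b ≤ tj * tj' := by
    intro b hb
    have hbK : b < K := Finset.mem_range.mp (hsubj' hb)
    by_cases hcase : (D j' \ {b}).Nonempty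
    · have h := (ppd_q K J θ N hθpos hN D hD hmin j' j (Ne.symm hjj') b hb hcase).1
      exact ppd_qcomp' (hN b hbK) htj htj' h hlt
    · have hsing := ppd_singleton_of_not_ne hb hcase
      have havg := ppd_singleton_avg (θ := θ) (hN b hbK).ne' hsing
      have htjsq : tj' * tj' = θ b := by
        rw [htj'_def, havg]
        exact Real.mul_self_sqrt (hθpos b hbK).le
      have hlt2 : θ b < tj * tj' := by
        rw [← htjsq]
        exact mul_lt_mul_of_pos_right hlt htj'
      exact hlt2.le
  intro a ha b hb
  have haK : a < K := Finset.mem_range.mp (hsubj ha)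
  have hbK : b < K := Finset.mem_range.mp (hsubj' hb)
  have hab : a ≠ b := by
    intro h
    subst h
    exact Finset.disjoint_left.mp (hD.2.1 j j' hjj') ha hb
  rcases lt_trichotomy a b with h | h | h
  · exact h
  · exact absurd h hab
  · exfalso
    have := hθanti b a h haK
    have h1 := claimA a ha
    have h2 := claimB b hb
    linarith

/-- Among all partitions of the K groups {0,…,K−1} into J nonempty clusters, the
value ∑_j N^j √(θ^j), where N^j = ∑_{i∈C_j} N_i and θ^j = (∑_{i∈C_j} N_i θ_i)/N^j,
is minimized by a partition in which every cluster consists of consecutive indices.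
Groups are indexed 0, …, K−1 with strictly decreasing willingness to pay. -/
theorem partial_pricing_consecutive_partition_optimal (K J : ℕ)
    (hJ : 1 ≤ J) (hJK : J ≤ K)
    (θ N : ℕ → ℝ)
    (hθpos : ∀ i < K, 0 < θ i)
    (hθanti : ∀ i j, i < j → j < K → θ j < θ i)
    (hN : ∀ i < K, 0 < N i) :
    ∃ D : Fin J → Finset ℕ,
      -- D is a partition of {0,…,K−1} into J nonempty clusters
      ((∀ j, (D j).Nonempty) ∧
        (∀ j j', j ≠ j' → Disjoint (D j) (D j')) ∧
        Finset.univ.biUnion D = Finset.range K) ∧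
      -- every cluster of D is a set of consecutive indices
      (∀ j : Fin J, ∀ a c : ℕ, a ∈ D j → c ∈ D j →
        ∀ b : ℕ, a ≤ b → b ≤ c → b ∈ D j) ∧
      -- D minimizes the value among all partitions into J nonempty clusters
      (∀ C : Fin J → Finset ℕ,
        ((∀ j, (C j).Nonempty) ∧
          (∀ j j', j ≠ j' → Disjoint (C j) (C j')) ∧
          Finset.univ.biUnion C = Finset.range K) →
        (∑ j : Fin J, (∑ i ∈ D j, N i) *
            Real.sqrt ((∑ i ∈ D j, N i * θ i) / (∑ i ∈ D j, N i))) ≤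
        (∑ j : Fin J, (∑ i ∈ C j, N i) *
            Real.sqrt ((∑ i ∈ C j, N i * θ i) / (∑ i ∈ C j, N i)))) := by

  obtain ⟨D, hD, hmin⟩ := ppd_exists_min K J hJ hJK θ N
  refine ⟨D, hD, ?_, fun C hC => hmin C hC⟩
  intro j a c ha hc b hab hbc
  have hcK : c < K := Finset.mem_range.mp (ppd_cluster_sub hD j hc)
  have hbK : b < K := lt_of_le_of_lt hbc hcK
  have hb : b ∈ Finset.univ.biUnion D := by
    rw [hD.2.2]
    exact Finset.mem_range.mpr hbK
  obtain ⟨j'', _, hbj''⟩ := Finset.mem_biUnion.mp hb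
  by_cases hj : j'' = j
  · exact hj ▸ hbj''
  · exfalso
    have hne := ppd_t_ne K J θ N hθpos hθanti hN D hD hmin j'' j hj
    rcases lt_or_gt_of_ne hne with h | h
    · -- t_{j''} < t_j : everything in D j is before everything in D j''
      have := ppd_sep K J θ N hθpos hθanti hN D hD hmin j j''
        (fun hh => hj hh.symm) h c hc b hbj''
      omega
    · -- t_j < t_{j''} : everything in D j'' is before everything in D j
      have := ppd_sep K J θ N hθpos hθanti hN D hD hmin j'' j hj h b hbj'' a ha
      omega
end

section
/- Let S > 0, N_1, …, N_K > 0, and 1 ≤ q ≤ K − 1. Define g : (0,∞) → ℝ by g(t) = t²·ln t − (t² − 1) + ((t·∑_{k=1}^q N_k + N_{q+1})/(S + ∑_{k=1}^K N_k))·(t − 1). Then g has a unique zero t_q in the open interval (1, ∞); moreover g(t) < 0 for 1 < t < t_q and g(t) > 0 for t > t_q. -/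
/-!
With `a = ∑_{k=1}^q N_k`, `b = N_{q+1}` and `D = S + ∑_k N_k`, the function
`g t = thresholdFun a b D t = t² ln t - (t² - 1) + ((a t + b) / D) (t - 1)` has
`g'' t = 2 ln t + 1 + 2a/D > 0` on `[1, ∞)`, so it is strictly convex there. It vanishes at `1`
with `g' 1 = (a + b)/D - 1 < 0`, so it dips below zero just after `1`, and `g e > 0`. By strict
convexity the secant slope `g t / (t - 1)` is strictly increasing on `(1, ∞)`, so `g` changes
sign exactly once there.
-/

open Real Set Filter Topology

lemma strictConvexOn_of_hasDerivAt2_pos {D : Set ℝ} (hD : Convex ℝ D) {f f' f'' : ℝ → ℝ}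
    (hf : ContinuousOn f D) (hf' : ∀ x ∈ interior D, HasDerivAt f (f' x) x)
    (hf'' : ∀ x ∈ interior D, HasDerivAt f' (f'' x) x)
    (hf''₀ : ∀ x ∈ interior D, 0 < f'' x) : StrictConvexOn ℝ D f := by
  have hmono : StrictMonoOn f' (interior D) :=
    strictMonoOn_of_deriv_pos hD.interior
      (fun x hx ↦ (hf'' x hx).continuousAt.continuousWithinAt)
      (fun x hx ↦ by
        rw [interior_interior] at hx
        rw [(hf'' x hx).deriv]
        exact hf''₀ x hx)
  exact (hmono.congr fun x hx ↦ (hf' x hx).deriv.symm).strictConvexOn_of_deriv hD hf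

lemma HasDerivWithinAt.exists_mem_Ioo_lt_of_neg {f : ℝ → ℝ} {a b d : ℝ}
    (hf : HasDerivWithinAt f d (Ioi a) a) (hd : d < 0) (hab : a < b) :
    ∃ y ∈ Ioo a b, f y < f a := by
  have hslope : Tendsto (slope f a) (𝓝[>] a) (𝓝 d) := by
    simpa using hasDerivWithinAt_iff_tendsto_slope.mp hf
  obtain ⟨y, hy_neg, hy⟩ :=
    ((hslope.eventually (gt_mem_nhds hd)).and (Ioo_mem_nhdsGT hab)).exists
  refine ⟨y, hy, ?_⟩
  rw [slope_def_field] at hy_neg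
  simpa using (div_lt_iff₀ (sub_pos.2 hy.1)).1 hy_neg

namespace StrictConvexOn

variable {f : ℝ → ℝ} {a c t : ℝ}

lemma neg_of_lt_of_eq_zero (hf : StrictConvexOn ℝ (Ici a) f) (hfa : f a = 0) (hfc : f c = 0)
    (hat : a < t) (htc : t < c) : f t < 0 := by
  have := hf.secant_strict_mono self_mem_Ici hat.le (hat.trans htc).le hat.ne'
    (hat.trans htc).ne' htc
  simp only [hfa, hfc, sub_zero, zero_div] at this
  simpa using (div_lt_iff₀ (sub_pos.2 hat)).1 this

lemma pos_of_lt_of_eq_zero (hf : StrictConvexOn ℝ (Ici a) f) (hfa : f a = 0) (hfc : f c = 0)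
    (hac : a < c) (hct : c < t) : 0 < f t := by
  have := hf.secant_strict_mono self_mem_Ici hac.le (hac.trans hct).le hac.ne'
    (hac.trans hct).ne' hct
  simp only [hfa, hfc, sub_zero, zero_div] at this
  exact (div_pos_iff_of_pos_right (sub_pos.2 (hac.trans hct))).1 this

theorem exists_unique_zero_Ioi (hf : StrictConvexOn ℝ (Ici a) f) (hfa : f a = 0) {d z : ℝ}
    (hd : HasDerivWithinAt f d (Ioi a) a) (hd₀ : d < 0) (haz : a < z) (hz : 0 < f z) :
    ∃ c, a < c ∧ f c = 0 ∧ (∀ t, a < t → f t = 0 → t = c) ∧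
      (∀ t, a < t → t < c → f t < 0) ∧ ∀ t, c < t → 0 < f t := by
  obtain ⟨y, ⟨hay, hyz⟩, hy⟩ := hd.exists_mem_Ioo_lt_of_neg hd₀ haz
  have hcont : ContinuousOn f (Icc y z) := by
    refine hf.convexOn.continuousOn_interior.mono ?_
    rw [interior_Ici]
    exact fun t ht ↦ hay.trans_le ht.1
  obtain ⟨c, ⟨hyc, -⟩, hc⟩ := intermediate_value_Ioo hyz.le hcont ⟨hfa ▸ hy, hz⟩
  have hac := hay.trans hyc
  have hneg : ∀ t, a < t → t < c → f t < 0 := fun t ↦ hf.neg_of_lt_of_eq_zero hfa hc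
  have hpos : ∀ t, c < t → 0 < f t := fun t ↦ hf.pos_of_lt_of_eq_zero hfa hc hac
  refine ⟨c, hac, hc, fun t hat ht ↦ ?_, hneg, hpos⟩
  rcases lt_trichotomy t c with htc | rfl | hct
  · exact absurd ht (hneg t hat htc).ne
  · rfl
  · exact absurd ht (hpos t hct).ne'

end StrictConvexOn

noncomputable def thresholdFun (a b D t : ℝ) : ℝ :=
  t ^ 2 * log t - (t ^ 2 - 1) + ((t * a + b) / D) * (t - 1)

section thresholdFun

variable {a b D t : ℝ}

lemma hasDerivAt_thresholdFun (ht : 0 < t) :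
    HasDerivAt (thresholdFun a b D) (2 * t * log t - t + (2 * a * t - a + b) / D) t := by
  have hsq := hasDerivAt_pow 2 t
  have hid := hasDerivAt_id' t
  refine (((hsq.fun_mul (hasDerivAt_log ht.ne')).fun_sub (hsq.sub_const 1)).fun_add
    ((((hid.mul_const a).add_const b).div_const D).fun_mul (hid.sub_const 1))).congr_deriv ?_
  field_simp
  ring

lemma hasDerivAt_deriv_thresholdFun (ht : 0 < t) :
    HasDerivAt (fun t ↦ 2 * t * log t - t + (2 * a * t - a + b) / D) (2 * log t + 1 + 2 * a / D)
      t := by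
  have hid := hasDerivAt_id' t
  refine ((((hid.const_mul 2).fun_mul (hasDerivAt_log ht.ne')).fun_sub hid).fun_add
    ((((hid.const_mul (2 * a)).sub_const a).add_const b).div_const D)).congr_deriv ?_
  field_simp
  ring

lemma strictConvexOn_thresholdFun (ha : 0 ≤ a) (hD : 0 < D) :
    StrictConvexOn ℝ (Ici 1) (thresholdFun a b D) := by
  have hint : ∀ t ∈ interior (Ici (1 : ℝ)), 1 < t := fun t ht ↦ by rwa [interior_Ici] at ht
  refine strictConvexOn_of_hasDerivAt2_pos (convex_Ici 1)
    (fun t ht ↦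
      (hasDerivAt_thresholdFun (zero_lt_one.trans_le ht)).continuousAt.continuousWithinAt)
    (fun t ht ↦ hasDerivAt_thresholdFun (zero_lt_one.trans (hint t ht)))
    (fun t ht ↦ hasDerivAt_deriv_thresholdFun (zero_lt_one.trans (hint t ht)))
    fun t ht ↦ ?_
  have := log_pos (hint t ht)
  have : 0 ≤ 2 * a / D := by positivity
  linarith

lemma thresholdFun_one : thresholdFun a b D 1 = 0 := by simp [thresholdFun]

lemma thresholdFun_exp_one_pos (ha : 0 ≤ a) (hb : 0 ≤ b) (hD : 0 < D) :
    0 < thresholdFun a b D (exp 1) := by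
  have he : 1 < exp 1 := one_lt_exp_iff.2 one_pos
  have : 0 ≤ (exp 1 * a + b) / D * (exp 1 - 1) := by
    have := he.le
    positivity
  rw [thresholdFun, log_exp]
  linarith

theorem thresholdFun_exists_unique_zero (ha : 0 ≤ a) (hb : 0 ≤ b) (hD : 0 < D)
    (hab : a + b < D) :
    ∃ c, 1 < c ∧ thresholdFun a b D c = 0 ∧
      (∀ t, 1 < t → thresholdFun a b D t = 0 → t = c) ∧
      (∀ t, 1 < t → t < c → thresholdFun a b D t < 0) ∧
      ∀ t, c < t → 0 < thresholdFun a b D t := by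
  have hderiv_one : 2 * 1 * log 1 - 1 + (2 * a * 1 - a + b) / D < 0 :=
    calc 2 * 1 * log 1 - 1 + (2 * a * 1 - a + b) / D = (a + b) / D - 1 := by rw [log_one]; ring
      _ < 0 := by linarith [(div_lt_one hD).2 hab]
  exact (strictConvexOn_thresholdFun ha hD).exists_unique_zero_Ioi thresholdFun_one
    (hasDerivAt_thresholdFun one_pos).hasDerivWithinAt hderiv_one (one_lt_exp_iff.2 one_pos)
    (thresholdFun_exp_one_pos ha hb hD)

end thresholdFun

open Finset in
/-- Group sizes are indexed from `0`, so `∑_{k=1}^q N_k` is `∑ k ∈ range q, N k` and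
`N_{q+1}` is `N q`. -/
theorem iccp_threshold_exists_unique (S : ℝ) (hS : 0 < S)
    (K : ℕ) (N : ℕ → ℝ) (hN : ∀ k < K, 0 < N k)
    (q : ℕ) (hq1 : 1 ≤ q) (hqK : q ≤ K - 1) :
    ∃ tq : ℝ, 1 < tq ∧
      (tq ^ 2 * Real.log tq - (tq ^ 2 - 1) +
        ((tq * ∑ k ∈ Finset.range q, N k + N q) /
          (S + ∑ k ∈ Finset.range K, N k)) * (tq - 1) = 0) ∧
      (∀ t : ℝ, 1 < t →
        (t ^ 2 * Real.log t - (t ^ 2 - 1) +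
          ((t * ∑ k ∈ Finset.range q, N k + N q) /
            (S + ∑ k ∈ Finset.range K, N k)) * (t - 1) = 0) → t = tq) ∧
      (∀ t : ℝ, 1 < t → t < tq →
        t ^ 2 * Real.log t - (t ^ 2 - 1) +
          ((t * ∑ k ∈ Finset.range q, N k + N q) /
            (S + ∑ k ∈ Finset.range K, N k)) * (t - 1) < 0) ∧
      (∀ t : ℝ, tq < t →
        0 < t ^ 2 * Real.log t - (t ^ 2 - 1) +
          ((t * ∑ k ∈ Finset.range q, N k + N q) /
            (S + ∑ k ∈ Finset.range K, N k)) * (t - 1)) := by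
  have hqK' : q < K := by omega
  have hN_nonneg : ∀ k ∈ range K, 0 ≤ N k := fun k hk ↦ (hN k (mem_range.1 hk)).le
  have hprefix_nonneg : 0 ≤ ∑ k ∈ range q, N k :=
    sum_nonneg fun k hk ↦ hN_nonneg k (mem_range.2 ((mem_range.1 hk).trans hqK'))
  have hprefix_le : ∑ k ∈ range q, N k + N q ≤ ∑ k ∈ range K, N k := by
    rw [← sum_range_succ]
    exact sum_le_sum_of_subset_of_nonneg (range_subset_range.2 hqK') fun k hk _ ↦ hN_nonneg k hk
  have hNq := hN q hqK'
  exact thresholdFun_exists_unique_zero hprefix_nonneg hNq.le (by linarith) (by linarith)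
end

section
/- Let h(t) = t²·ln t − (t² − 1). Then h has a unique zero t_root in the open interval (1, ∞), and 2.21 < t_root < 2.22. Moreover, for any S > 0, N_1, …, N_K > 0 and 1 ≤ q ≤ K − 1, the unique root t_q in (1,∞) of g(t) = t²·ln t − (t² − 1) + ((t·∑_{k=1}^q N_k + N_{q+1})/(S + ∑_{k=1}^K N_k))·(t − 1) satisfies t_q < t_root. -/
/-!
Write `h t = t² log t − (t² − 1)`. Since `h' t = t (2 log t − 1)`, `h` decreases on `[1, √e]`
from `h 1 = 0` and increases on `[√e, ∞)`, so it has exactly one zero `r` in `(1, ∞)` and is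
negative on `(1, r)` and positive on `(r, ∞)`. The bounds `2.21 < r < 2.22` are the signs of `h`
at the endpoints, checked through `log x = (8 log 2 + log (x⁷ / 2⁸)) / 7` with `log 2` known to
nine digits. The correction term of `g` is positive on `(1, ∞)`, so `g t_q = 0` forces
`h t_q < 0`, i.e. `t_q < r`.
-/

open Real Set

lemma Real.mul_log_le_mul_log_add {x b : ℝ} (hx : 0 < x) (hb : 0 < b) (n m : ℕ) :
    n * log x ≤ m * log b + (x ^ n / b ^ m - 1) := by
  have := log_le_sub_one_of_pos (show 0 < x ^ n / b ^ m by positivity)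
  rw [log_div (by positivity) (by positivity), log_pow, log_pow] at this
  linarith

lemma Real.mul_log_add_le_mul_log {x b : ℝ} (hx : 0 < x) (hb : 0 < b) (n m : ℕ) :
    m * log b + (1 - (x ^ n / b ^ m)⁻¹) ≤ n * log x := by
  have := one_sub_inv_le_log_of_pos (show 0 < x ^ n / b ^ m by positivity)
  rw [log_div (by positivity) (by positivity), log_pow, log_pow] at this
  linarith

lemma Real.exp_half_lt_2_21 : exp (1 / 2) < 2.21 := by
  have hsq : exp (1 / 2) ^ 2 = exp 1 := by rw [← exp_nat_mul]; norm_num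
  nlinarith [exp_one_lt_d9, exp_pos (1 / 2)]

namespace ICCP

noncomputable def h (t : ℝ) : ℝ := t ^ 2 * log t - (t ^ 2 - 1)

lemma h_one : h 1 = 0 := by simp [h]

lemma hasDerivAt_h {t : ℝ} (ht : t ≠ 0) : HasDerivAt h (t * (2 * log t - 1)) t := by
  have := ((hasDerivAt_pow 2 t).mul (hasDerivAt_log ht)).sub ((hasDerivAt_pow 2 t).sub_const 1)
  refine this.congr_deriv ?_
  field_simp
  ring

lemma continuousOn_h : ContinuousOn h (Ioi 0) := fun _ ht =>
  (hasDerivAt_h (ne_of_gt ht)).continuousAt.continuousWithinAt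

lemma strictAntiOn_h : StrictAntiOn h (Icc 1 (exp (1 / 2))) := by
  refine strictAntiOn_of_deriv_neg (convex_Icc _ _)
    (continuousOn_h.mono fun t ht => zero_lt_one.trans_le ht.1) fun t ht => ?_
  rw [interior_Icc] at ht
  have ht0 : 0 < t := zero_lt_one.trans ht.1
  have hlog : log t < 1 / 2 := (log_lt_iff_lt_exp ht0).2 ht.2
  rw [(hasDerivAt_h ht0.ne').deriv]
  exact mul_neg_of_pos_of_neg ht0 (by linarith)

lemma strictMonoOn_h : StrictMonoOn h (Ici (exp (1 / 2))) := by
  refine strictMonoOn_of_deriv_pos (convex_Ici _)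
    (continuousOn_h.mono fun t ht => (exp_pos _).trans_le ht) fun t ht => ?_
  rw [interior_Ici] at ht
  have ht0 : 0 < t := (exp_pos _).trans ht
  have hlog : 1 / 2 < log t := (lt_log_iff_exp_lt ht0).2 ht
  rw [(hasDerivAt_h ht0.ne').deriv]
  exact mul_pos ht0 (by linarith)

lemma h_neg_of_le_exp_half {t : ℝ} (ht : 1 < t) (ht' : t ≤ exp (1 / 2)) : h t < 0 :=
  h_one ▸ strictAntiOn_h ⟨le_rfl, (ht.trans_le ht').le⟩ ⟨ht.le, ht'⟩ ht

section Root

variable {r : ℝ}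

lemma h_pos_of_lt (hr : exp (1 / 2) ≤ r) (hr0 : h r = 0) {t : ℝ} (hrt : r < t) : 0 < h t :=
  hr0 ▸ strictMonoOn_h hr (hr.trans hrt.le) hrt

lemma h_neg_iff_lt (hr : exp (1 / 2) ≤ r) (hr0 : h r = 0) {t : ℝ} (ht : 1 < t) :
    h t < 0 ↔ t < r := by
  refine ⟨fun hneg => not_le.1 fun hrt => ?_, fun htr => ?_⟩
  · rcases hrt.lt_or_eq with hrt | rfl
    · exact (h_pos_of_lt hr hr0 hrt).not_gt hneg
    · exact hneg.ne hr0
  · rcases le_total t (exp (1 / 2)) with hte | hte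
    · exact h_neg_of_le_exp_half ht hte
    · exact hr0 ▸ strictMonoOn_h hte hr htr

lemma eq_of_h_eq_zero (hr : exp (1 / 2) ≤ r) (hr0 : h r = 0) {t : ℝ} (ht : 1 < t)
    (ht0 : h t = 0) : t = r := by
  rcases lt_trichotomy t r with htr | htr | htr
  · exact absurd ht0 ((h_neg_iff_lt hr hr0 ht).2 htr).ne
  · exact htr
  · exact absurd ht0 (h_pos_of_lt hr hr0 htr).ne'

end Root

lemma h_2_21_neg : h 2.21 < 0 := by
  have := mul_log_le_mul_log_add (x := 2.21) (by norm_num) two_pos 7 8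
  have := log_two_lt_d9
  norm_num [h] at *
  linarith

lemma h_2_22_pos : 0 < h 2.22 := by
  have := mul_log_add_le_mul_log (x := 2.22) (by norm_num) two_pos 7 8
  have := log_two_gt_d9
  norm_num [h] at *
  linarith

lemma exists_root_h : ∃ r ∈ Ioo 2.21 2.22, h r = 0 :=
  intermediate_value_Ioo (by norm_num)
    (continuousOn_h.mono fun _ ht => lt_of_lt_of_le (by norm_num) ht.1) ⟨h_2_21_neg, h_2_22_pos⟩

lemma threshold_coeff_pos {S t : ℝ} {K q : ℕ} {N : ℕ → ℝ} (hS : 0 < S) (hN : ∀ k < K, 0 < N k)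
    (hqK : q < K) (ht : 0 ≤ t) :
    0 < (t * ∑ k ∈ Finset.range q, N k + N q) / (S + ∑ k ∈ Finset.range K, N k) := by
  have hsum {n : ℕ} (hn : n ≤ K) : 0 ≤ ∑ k ∈ Finset.range n, N k :=
    Finset.sum_nonneg fun k hk => (hN k (by grind)).le
  have := hN q hqK
  exact div_pos (by nlinarith [hsum hqK.le]) (by linarith [hsum le_rfl])

end ICCP

/-- The function h(t) = t² ln t − (t² − 1) has a unique zero t_root in (1, ∞), with
2.21 < t_root < 2.22; moreover every root t_q in (1, ∞) of
g(t) = h(t) + ((t ∑_{k=1}^q N_k + N_{q+1})/(S + ∑_{k=1}^K N_k))(t − 1)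
satisfies t_q < t_root. Group sizes are indexed 0, …, K−1. -/
theorem iccp_threshold_bound :
    ∃ troot : ℝ,
      (1 < troot ∧
        troot ^ 2 * Real.log troot - (troot ^ 2 - 1) = 0 ∧
        ∀ t : ℝ, 1 < t → t ^ 2 * Real.log t - (t ^ 2 - 1) = 0 → t = troot) ∧
      (2.21 < troot ∧ troot < 2.22) ∧
      ∀ (S : ℝ) (K : ℕ) (N : ℕ → ℝ) (q : ℕ),
        0 < S → (∀ k < K, 0 < N k) → 1 ≤ q → q ≤ K - 1 →
        ∀ tq : ℝ, 1 < tq →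
          (tq ^ 2 * Real.log tq - (tq ^ 2 - 1) +
            ((tq * ∑ k ∈ Finset.range q, N k + N q) /
              (S + ∑ k ∈ Finset.range K, N k)) * (tq - 1) = 0) →
          tq < troot := by
  obtain ⟨r, ⟨hr_gt, hr_lt⟩, hr0⟩ := ICCP.exists_root_h
  have hr : exp (1 / 2) ≤ r := (exp_half_lt_2_21.trans hr_gt).le
  refine ⟨r, ⟨by linarith, hr0, fun t ht ht0 => ICCP.eq_of_h_eq_zero hr hr0 ht ht0⟩,
    ⟨hr_gt, hr_lt⟩, ?_⟩
  intro S K N q hS hN hq hqK tq htq hg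
  have hqK' : q < K := by omega
  have hcorr := mul_pos (ICCP.threshold_coeff_pos hS hN hqK' (show (0 : ℝ) ≤ tq by linarith))
    (sub_pos.2 htq)
  refine (ICCP.h_neg_iff_lt hr hr0 htq).1 ?_
  unfold ICCP.h
  linarith
end

section
/- Let λ > 0 and θ_i > θ_q > λ. Set p_i = √(θ_i·λ), p_q = √(θ_q·λ), s_q* = √(θ_q/λ) − 1, and t = √(θ_i/θ_q). Then the incentive-compatibility condition θ_i·ln(1 + s_q*) − p_q·s_q* ≤ max_{s ≥ 0} (θ_i·ln(1+s) − p_i·s) holds if and only if t²·ln t − (t² − 1) + √(λ/θ_q)·(t − 1) ≥ 0. -/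
set_option maxHeartbeats 1000000 in
/-- Incentive-compatibility condition between a high-willingness group i and a
low-willingness group q under CP prices p_i = √(θ_i λ), p_q = √(θ_q λ) and
allocation s_q* = √(θ_q/λ) − 1: a group-i user's surplus from taking group q's
price and allocation does not exceed its own maximum surplus iff
t² ln t − (t² − 1) + √(λ/θ_q)(t − 1) ≥ 0, where t = √(θ_i/θ_q). -/
theorem iccp_condition_iff (lam θi θq : ℝ)
    (hlam : 0 < lam) (hq : lam < θq) (hiq : θq < θi) :
    ∀ M : ℝ,
      IsGreatest ((fun s : ℝ => θi * Real.log (1 + s) - Real.sqrt (θi * lam) * s) ''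
        Set.Ici 0) M →
      (θi * Real.log (1 + (Real.sqrt (θq / lam) - 1)) -
          Real.sqrt (θq * lam) * (Real.sqrt (θq / lam) - 1) ≤ M ↔
        0 ≤ Real.sqrt (θi / θq) ^ 2 * Real.log (Real.sqrt (θi / θq)) -
            (Real.sqrt (θi / θq) ^ 2 - 1) +
            Real.sqrt (lam / θq) * (Real.sqrt (θi / θq) - 1)) := by
  intro M hM
  have hθq : 0 < θq := hlam.trans hq
  have hθi : 0 < θi := hθq.trans hiq
  set a := Real.sqrt lam with ha_def
  set b := Real.sqrt θq with hb_def
  set c := Real.sqrt θi with hc_def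
  have ha : 0 < a := Real.sqrt_pos.2 hlam
  have hb : 0 < b := Real.sqrt_pos.2 hθq
  have hc : 0 < c := Real.sqrt_pos.2 hθi
  have hab : a < b := Real.sqrt_lt_sqrt hlam.le hq
  have hbc : b < c := Real.sqrt_lt_sqrt hθq.le hiq
  have e1 : Real.sqrt (θq / lam) = b / a := Real.sqrt_div hθq.le _
  have e2 : Real.sqrt (θi / θq) = c / b := Real.sqrt_div hθi.le _
  have e3 : Real.sqrt (lam / θq) = a / b := Real.sqrt_div hlam.le _
  have e4 : Real.sqrt (θq * lam) = b * a := Real.sqrt_mul hθq.le _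
  have e5 : Real.sqrt (θi * lam) = c * a := Real.sqrt_mul hθi.le _
  have eb : b ^ 2 = θq := Real.sq_sqrt hθq.le
  have ec : c ^ 2 = θi := Real.sq_sqrt hθi.le
  have hca : 0 < c / a := div_pos hc ha
  have hM0 : IsGreatest
      ((fun s : ℝ => θi * Real.log (1 + s) - Real.sqrt (θi * lam) * s) '' Set.Ici 0)
      (θi * Real.log (c / a) - (c * a) * (c / a - 1)) := by
    constructor
    · refine ⟨c / a - 1, ?_, ?_⟩
      · have h1 : 1 ≤ c / a := (one_le_div ha).2 (hab.le.trans hbc.le)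
        simpa using h1
      · simp only [e5]
        rw [show (1 : ℝ) + (c / a - 1) = c / a by ring]
    · rintro y ⟨s, hs, rfl⟩
      simp only [e5]
      have hs0 : (0 : ℝ) ≤ s := hs
      have h1 : (0 : ℝ) < 1 + s := by linarith
      have hlog : Real.log (1 + s) - Real.log (c / a) ≤ (1 + s) / (c / a) - 1 := by
        rw [← Real.log_div (ne_of_gt h1) (ne_of_gt hca)]
        exact Real.log_le_sub_one_of_pos (div_pos h1 hca)
      have key : θi * ((1 + s) / (c / a) - 1) = c * a * (s - (c / a - 1)) := by
        rw [← ec]; field_simp; ring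
      nlinarith [mul_le_mul_of_nonneg_left hlog hθi.le, key]
  have hMval : M = θi * Real.log (c / a) - (c * a) * (c / a - 1) := hM.unique hM0
  rw [hMval, e1, e2, e3, e4]
  rw [show (1 : ℝ) + (b / a - 1) = b / a by ring]
  rw [Real.log_div (ne_of_gt hb) (ne_of_gt ha), Real.log_div (ne_of_gt hc) (ne_of_gt ha),
    Real.log_div (ne_of_gt hc) (ne_of_gt hb)]
  rw [← ec]
  have hkey :
      c ^ 2 * (Real.log c - Real.log a) - c * a * (c / a - 1) -
          (c ^ 2 * (Real.log b - Real.log a) - b * a * (b / a - 1)) =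
        b ^ 2 * ((c / b) ^ 2 * (Real.log c - Real.log b) - ((c / b) ^ 2 - 1) +
          a / b * (c / b - 1)) := by
    field_simp; ring
  have hb2 : (0 : ℝ) < b ^ 2 := by positivity
  constructor
  · intro h
    nlinarith [hkey, hb2]
  · intro h
    nlinarith [hkey, mul_nonneg hb2.le h]
end
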